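/- arXiv:1812.08128 — 7 statements merged into one kernel-verified Lean document; each statement's English description precedes it below -/
import Mathlib

section
/- Let d ≥ 1, let C be a d-clutter on [n], let 𝕂 be a field, and let e ∈ C be a circuit. Then e is an exposed circuit of C if and only if the monomial x_e is a linear divisor for the circuit ideal I_{C̄} of the complement clutter, i.e. if and only if the colon ideal (I_{C̄} : x_e) is generated by a subset of the variables {x_1,…,x_n}. -/
open Finset MvPolynomial

def IsClutterClique (n d : ℕ) (C : Finset (Finset (Fin n))) (S : Finset (Fin n)) : Prop :=
  S.card < d ∨ ∀ t : Finset (Fin n), t ⊆ S → t.card = d → t ∈ C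

def IsMaxClutterClique (n d : ℕ) (C : Finset (Finset (Fin n))) (S : Finset (Fin n)) : Prop :=
  IsClutterClique n d C S ∧ ∀ T, IsClutterClique n d C T → S ⊆ T → S = T

def IsExposedCircuit (n d : ℕ) (C : Finset (Finset (Fin n))) (e : Finset (Fin n)) : Prop :=
  e ∈ C ∧ ∃! S, IsMaxClutterClique n d C S ∧ e ⊆ S

def complClutter (n d : ℕ) (C : Finset (Finset (Fin n))) : Finset (Finset (Fin n)) :=
  (Finset.powersetCard d (Finset.univ : Finset (Fin n))).filter (· ∉ C)

noncomputable def xMon (𝕂 : Type) [Field 𝕂] (n : ℕ) (e : Finset (Fin n)) :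
    MvPolynomial (Fin n) 𝕂 :=
  ∏ i ∈ e, X i

noncomputable def circuitIdeal (𝕂 : Type) [Field 𝕂] (n : ℕ) (C : Finset (Finset (Fin n))) :
    Ideal (MvPolynomial (Fin n) 𝕂) :=
  Ideal.span (xMon 𝕂 n '' ↑C)

def GeneratedByVariables (𝕂 : Type) [Field 𝕂] (n : ℕ) (I : Ideal (MvPolynomial (Fin n) 𝕂)) :
    Prop :=
  ∃ S : Set (Fin n), I = Ideal.span ((fun i => (X i : MvPolynomial (Fin n) 𝕂)) '' S)

/-! ### Auxiliary material -/

noncomputable def degF (n : ℕ) (e : Finset (Fin n)) : Fin n →₀ ℕ :=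
  ∑ i ∈ e, Finsupp.single i 1

lemma degF_apply {n : ℕ} (e : Finset (Fin n)) (j : Fin n) :
    degF n e j = if j ∈ e then 1 else 0 := by
  classical
  simp [degF, Finsupp.finset_sum_apply, Finsupp.single_apply]

lemma xMon_eq {𝕂 : Type} [Field 𝕂] {n : ℕ} (e : Finset (Fin n)) :
    xMon 𝕂 n e = monomial (degF n e) 1 := by
  classical
  induction e using Finset.induction with
  | empty => simp [xMon, degF]
  | @insert a s h ih =>
      rw [xMon, Finset.prod_insert h,
        show (∏ i ∈ s, (X i : MvPolynomial (Fin n) 𝕂)) = xMon 𝕂 n s from rfl, ih,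
        show degF n (insert a s) = Finsupp.single a 1 + degF n s from by
          rw [degF, Finset.sum_insert h]; rfl,
        show (X a : MvPolynomial (Fin n) 𝕂) = monomial (Finsupp.single a 1) 1 from rfl,
        monomial_mul, one_mul]

lemma degF_le_iff {n : ℕ} (e : Finset (Fin n)) (m : Fin n →₀ ℕ) :
    degF n e ≤ m ↔ ∀ j ∈ e, 1 ≤ m j := by
  rw [Finsupp.le_def]
  constructor
  · intro h j hj
    have := h j
    rwa [degF_apply, if_pos hj] at this
  · intro h j
    rw [degF_apply]
    split_ifs with hj
    · exact h j hj
    · exact Nat.zero_le _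

lemma mem_complClutter {n d : ℕ} {C : Finset (Finset (Fin n))} {f : Finset (Fin n)} :
    f ∈ complClutter n d C ↔ f.card = d ∧ f ∉ C := by
  simp [complClutter, Finset.mem_powersetCard]

lemma mem_circuitIdeal_iff {𝕂 : Type} [Field 𝕂] {n : ℕ} (D : Finset (Finset (Fin n)))
    (p : MvPolynomial (Fin n) 𝕂) :
    p ∈ circuitIdeal 𝕂 n D ↔ ∀ m ∈ p.support, ∃ f ∈ D, degF n f ≤ m := by
  have himg : (xMon 𝕂 n '' ↑D) =
      ((fun s => (monomial s (1 : 𝕂) : MvPolynomial (Fin n) 𝕂)) '' (degF n '' ↑D)) := by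
    rw [Set.image_image]
    exact Set.image_congr fun f _ => xMon_eq f
  rw [circuitIdeal, himg, mem_ideal_span_monomial_image]
  constructor
  · intro h m hm
    obtain ⟨si, ⟨f, hf, rfl⟩, hle⟩ := h m hm
    exact ⟨f, hf, hle⟩
  · intro h m hm
    obtain ⟨f, hf, hle⟩ := h m hm
    exact ⟨degF n f, ⟨f, hf, rfl⟩, hle⟩

def Vset (n d : ℕ) (C : Finset (Finset (Fin n))) (e : Finset (Fin n)) : Set (Fin n) :=
  {i | i ∉ e ∧ ∃ f ∈ complClutter n d C, f ⊆ insert i e}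

def Pprop (n d : ℕ) (C : Finset (Finset (Fin n))) (e : Finset (Fin n)) : Prop :=
  ∀ f ∈ complClutter n d C, ∃ i ∈ f, i ∈ Vset n d C e

lemma degF_le_single_add_iff {n : ℕ} (f e : Finset (Fin n)) (i : Fin n) :
    degF n f ≤ Finsupp.single i 1 + degF n e ↔ f ⊆ insert i e := by
  rw [degF_le_iff]
  constructor
  · intro h j hj
    have := h j hj
    rw [Finsupp.add_apply, Finsupp.single_apply, degF_apply] at this
    by_cases hji : i = j
    · exact hji ▸ Finset.mem_insert_self i e
    · rw [if_neg hji] at this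
      split_ifs at this with hje
      · exact Finset.mem_insert_of_mem hje
      · omega
  · intro h j hj
    rw [Finsupp.add_apply, Finsupp.single_apply, degF_apply]
    rcases Finset.mem_insert.1 (h hj) with hji | hje
    · rw [if_pos hji.symm]; omega
    · rw [if_pos hje]; omega

lemma X_mem_colon_iff {𝕂 : Type} [Field 𝕂] {n d : ℕ} {C : Finset (Finset (Fin n))}
    {e : Finset (Fin n)} (hC : ∀ s ∈ C, s.card = d) (he : e ∈ C) (i : Fin n) :
    (X i : MvPolynomial (Fin n) 𝕂) ∈
      Submodule.colon (circuitIdeal 𝕂 n (complClutter n d C)) (Ideal.span {xMon 𝕂 n e}) ↔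
    i ∈ Vset n d C e := by
  classical
  rw [Ideal.mem_colon_span_singleton, xMon_eq]
  have hX : (X i : MvPolynomial (Fin n) 𝕂) = monomial (Finsupp.single i 1) 1 := rfl
  rw [hX, monomial_mul, one_mul, mem_circuitIdeal_iff]
  rw [support_monomial, if_neg (one_ne_zero : (1:𝕂) ≠ 0)]
  constructor
  · intro h
    obtain ⟨f, hf, hle⟩ := h _ (Finset.mem_singleton_self _)
    rw [degF_le_single_add_iff] at hle
    have hie : i ∉ e := by
      intro hie
      rw [Finset.insert_eq_self.2 hie] at hle
      have hfe : f = e := Finset.eq_of_subset_of_card_le hle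
        (by rw [(mem_complClutter.1 hf).1, hC e he])
      exact (mem_complClutter.1 hf).2 (hfe ▸ he)
    exact ⟨hie, f, hf, hle⟩
  · rintro ⟨hie, f, hf, hsub⟩ m hm
    rw [Finset.mem_singleton] at hm
    exact ⟨f, hf, hm ▸ (degF_le_single_add_iff f e i).2 hsub⟩

lemma genVar_iff_P {𝕂 : Type} [Field 𝕂] {n d : ℕ} {C : Finset (Finset (Fin n))}
    {e : Finset (Fin n)} (hC : ∀ s ∈ C, s.card = d) (he : e ∈ C) :
    GeneratedByVariables 𝕂 n
        (Submodule.colon (circuitIdeal 𝕂 n (complClutter n d C))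
          (Ideal.span {xMon 𝕂 n e})) ↔ Pprop n d C e := by
  classical
  constructor
  · rintro ⟨S, hS⟩ f hf
    -- xMon of f \ e lies in the colon ideal
    have hmem : (xMon 𝕂 n (f \ e) : MvPolynomial (Fin n) 𝕂) ∈
        Submodule.colon (circuitIdeal 𝕂 n (complClutter n d C)) (Ideal.span {xMon 𝕂 n e}) := by
      rw [Ideal.mem_colon_span_singleton, xMon_eq, xMon_eq, monomial_mul, one_mul,
        mem_circuitIdeal_iff]
      intro m hm
      rw [support_monomial, if_neg (one_ne_zero : (1:𝕂) ≠ 0), Finset.mem_singleton] at hm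
      refine ⟨f, hf, hm ▸ ?_⟩
      rw [degF_le_iff]
      intro j hj
      rw [Finsupp.add_apply, degF_apply, degF_apply]
      by_cases hje : j ∈ e
      · rw [if_pos hje]; omega
      · rw [if_pos (Finset.mem_sdiff.2 ⟨hj, hje⟩)]; omega
    rw [hS, mem_ideal_span_X_image] at hmem
    have hsup : (xMon 𝕂 n (f \ e) : MvPolynomial (Fin n) 𝕂).support = {degF n (f \ e)} := by
      rw [xMon_eq, support_monomial, if_neg (one_ne_zero : (1:𝕂) ≠ 0)]
    obtain ⟨i, hiS, hi⟩ := hmem _ (by rw [hsup]; exact Finset.mem_singleton_self _)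
    rw [degF_apply] at hi
    have hif : i ∈ f \ e := by
      by_contra hc
      rw [if_neg hc] at hi
      exact hi rfl
    refine ⟨i, (Finset.mem_sdiff.1 hif).1, ?_⟩
    have hXi : (X i : MvPolynomial (Fin n) 𝕂) ∈
        Ideal.span ((fun i => (X i : MvPolynomial (Fin n) 𝕂)) '' S) :=
      Ideal.subset_span ⟨i, hiS, rfl⟩
    rw [← hS] at hXi
    exact (X_mem_colon_iff hC he i).1 hXi
  · intro hP
    refine ⟨Vset n d C e, le_antisymm ?_ ?_⟩
    · intro p hp
      rw [Ideal.mem_colon_span_singleton, xMon_eq] at hp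
      rw [mem_ideal_span_X_image]
      intro m hm
      have hcoeff : coeff (m + degF n e) (p * monomial (degF n e) (1:𝕂)) ≠ 0 := by
        rw [coeff_mul_monomial, mul_one]
        exact mem_support_iff.1 hm
      obtain ⟨f, hf, hle⟩ := (mem_circuitIdeal_iff _ _).1 hp _ (mem_support_iff.2 hcoeff)
      obtain ⟨i, hif, hiV⟩ := hP f hf
      refine ⟨i, hiV, ?_⟩
      have h1 := (degF_le_iff f _).1 hle i hif
      rw [Finsupp.add_apply, degF_apply, if_neg hiV.1] at h1
      omega
    · rw [Ideal.span_le]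
      rintro _ ⟨i, hi, rfl⟩
      exact (X_mem_colon_iff hC he i).2 hi

lemma exposed_iff_P {n d : ℕ} (hd : 1 ≤ d) {C : Finset (Finset (Fin n))}
    {e : Finset (Fin n)} (hC : ∀ s ∈ C, s.card = d) (he : e ∈ C) :
    IsExposedCircuit n d C e ↔ Pprop n d C e := by
  classical
  set W : Finset (Fin n) := Finset.univ.filter (fun i => i ∉ Vset n d C e) with hWdef
  have hW : ∀ i, i ∈ W ↔ i ∉ Vset n d C e := by
    intro i; simp [hWdef]
  have heW : e ⊆ W := by
    intro i hi
    rw [hW]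
    rintro ⟨hie, -⟩
    exact hie hi
  have hcard_e : e.card = d := hC e he
  -- every clique containing e is contained in W
  have hA : ∀ S, IsClutterClique n d C S → e ⊆ S → S ⊆ W := by
    intro S hS heS i hiS
    rw [hW]
    rintro ⟨hie, f, hfC, hfsub⟩
    have hcard : ¬ S.card < d := by
      have := Finset.card_le_card heS
      omega
    rcases hS with h | h
    · exact hcard h
    · have hfS : f ⊆ S := hfsub.trans (Finset.insert_subset hiS heS)
      exact (mem_complClutter.1 hfC).2 (h f hfS (mem_complClutter.1 hfC).1)
  have clique_e : IsClutterClique n d C e := by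
    right
    intro t ht htc
    have : t = e := Finset.eq_of_subset_of_card_le ht (by omega)
    exact this ▸ he
  have clique_insert : ∀ i ∈ W, IsClutterClique n d C (insert i e) := by
    intro i hiW
    by_cases hie : i ∈ e
    · rwa [Finset.insert_eq_self.2 hie]
    · right
      intro t ht htc
      by_contra htC
      have : i ∈ Vset n d C e := ⟨hie, t, mem_complClutter.2 ⟨htc, htC⟩, ht⟩
      exact (hW i).1 hiW this
  have exists_max : ∀ A, IsClutterClique n d C A →
      ∃ T, IsMaxClutterClique n d C T ∧ A ⊆ T := by
    intro A hA'
    set s : Finset (Finset (Fin n)) :=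
      Finset.univ.powerset.filter (fun T => IsClutterClique n d C T ∧ A ⊆ T) with hsdef
    have hAs : A ∈ s := by
      simp only [hsdef, Finset.mem_filter, Finset.mem_powerset]
      exact ⟨Finset.subset_univ A, hA', Finset.Subset.refl A⟩
    obtain ⟨T, hTs, hmax⟩ := s.exists_max_image Finset.card ⟨A, hAs⟩
    simp only [hsdef, Finset.mem_filter, Finset.mem_powerset] at hTs
    refine ⟨T, ⟨hTs.2.1, ?_⟩, hTs.2.2⟩
    intro T' hT' hTT'
    have hT's : T' ∈ s := by
      simp only [hsdef, Finset.mem_filter, Finset.mem_powerset]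
      exact ⟨Finset.subset_univ T', hT', hTs.2.2.trans hTT'⟩
    exact Finset.eq_of_subset_of_card_le hTT' (hmax T' hT's)
  constructor
  · rintro ⟨-, S, ⟨hSmax, heS⟩, huniq⟩ f hf
    by_contra hcon
    push_neg at hcon
    have hfW : f ⊆ W := fun i hi => (hW i).2 (hcon i hi)
    have hWS : W ⊆ S := by
      intro i hiW
      obtain ⟨T, hTmax, hsub⟩ := exists_max _ (clique_insert i hiW)
      have hTe : e ⊆ T := (Finset.subset_insert i e).trans hsub
      have : T = S := huniq T ⟨hTmax, hTe⟩
      exact this ▸ hsub (Finset.mem_insert_self i e)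
    have hSW : S ⊆ W := hA S hSmax.1 heS
    have hSWeq : S = W := Finset.Subset.antisymm hSW hWS
    have hfS : f ⊆ S := hSWeq ▸ hfW
    rcases hSmax.1 with h | h
    · have := Finset.card_le_card heS; omega
    · exact (mem_complClutter.1 hf).2 (h f hfS (mem_complClutter.1 hf).1)
  · intro hP
    have cliqueW : IsClutterClique n d C W := by
      right
      intro t ht htc
      by_contra htC
      obtain ⟨i, hit, hiV⟩ := hP t (mem_complClutter.2 ⟨htc, htC⟩)
      exact (hW i).1 (ht hit) hiV
    refine ⟨he, W, ⟨⟨cliqueW, ?_⟩, heW⟩, ?_⟩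
    · intro T hT hWT
      exact Finset.Subset.antisymm hWT (hA T hT (heW.trans hWT))
    · rintro S ⟨hSmax, heS⟩
      exact hSmax.2 W cliqueW (hA S hSmax.1 heS)

theorem exposed_iff_linear_divisor (n d : ℕ) (hd : 1 ≤ d) (𝕂 : Type) [Field 𝕂]
    (C : Finset (Finset (Fin n))) (hC : ∀ s ∈ C, s.card = d)
    (e : Finset (Fin n)) (he : e ∈ C) :
    IsExposedCircuit n d C e ↔
      GeneratedByVariables 𝕂 n
        (Submodule.colon (circuitIdeal 𝕂 n (complClutter n d C))
          (Ideal.span {xMon 𝕂 n e})) := by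
  rw [exposed_iff_P hd hC he, genVar_iff_P hC he]
end

section
/- Let G be a graph on [n], let 𝕂 be a field, and let e = ij be an edge of G. Then e is an exposed edge of G if and only if the monomial x_i x_j is a linear divisor for the edge ideal I_{Ḡ} of the complement graph Ḡ, i.e. if and only if the colon ideal (I_{Ḡ} : x_i x_j) is generated by a subset of the variables {x_1,…,x_n}. -/
open Finset MvPolynomial

/-- A circuit is properly exposed if it is exposed and the unique maximal clique
containing it has more than `d` elements. -/
def IsProperlyExposedCircuit (n d : ℕ) (C : Finset (Finset (Fin n))) (e : Finset (Fin n)) :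
    Prop :=
  IsExposedCircuit n d C e ∧ ∀ S, IsMaxClutterClique n d C S → e ⊆ S → d < S.card

/-!
Let `M` be the set of vertices `k` such that `e ∪ {k}` is a clique; for an edge `e = ij` this is
the closed common neighbourhood of `i` and `j`. Both conditions of the theorem say that `M` is a
clique. Every clique containing `e` lies in `M`, so `e` lies in a unique maximal clique exactly
when `M` is a clique. On the other side, a monomial `x^μ` lies in `(I_Ḡ : x_e)` iff
`supp μ ∪ e` is not a clique. If `M` is a clique, this says that `supp μ` meets the complement of
`M`, so the colon ideal is generated by the variables outside `M`. Conversely, if the colon ideal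
is generated by variables and `{a, b} ⊆ M` is a non-edge, then `x_a x_b` is in the colon ideal but
neither `x_a` nor `x_b` is. The argument works verbatim for `d`-clutters, with a non-circuit
`d`-subset of `M` in place of `{a, b}`.
-/

section Cliques

variable {n d : ℕ} {C : Finset (Finset (Fin n))}

theorem IsClutterClique.subset {S T : Finset (Fin n)} (hT : IsClutterClique n d C T)
    (hST : S ⊆ T) : IsClutterClique n d C S := by
  rcases hT with hcard | hsub
  · exact .inl ((card_le_card hST).trans_lt hcard)
  · exact .inr fun t htS => hsub t (htS.trans hST)

theorem isClutterClique_of_mem_of_card_eq {e : Finset (Fin n)} (heC : e ∈ C) (hcard : e.card = d) :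
    IsClutterClique n d C e :=
  .inr fun _ hte htcard => by rwa [eq_of_subset_of_card_le hte (hcard.trans htcard.symm).le]

theorem exists_mem_complClutter_subset_iff {S : Finset (Fin n)} :
    (∃ t ∈ complClutter n d C, t ⊆ S) ↔ ¬IsClutterClique n d C S := by
  simp only [complClutter, mem_filter, mem_powersetCard_univ, IsClutterClique]
  constructor
  · rintro ⟨t, ⟨htcard, htC⟩, htS⟩ (hcard | hsub)
    · exact (card_le_card htS).not_gt (htcard ▸ hcard)
    · exact htC (hsub t htS htcard)
  · intro h
    push Not at h
    obtain ⟨-, t, htS, htcard, htC⟩ := h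
    exact ⟨t, ⟨htcard, htC⟩, htS⟩

theorem IsClutterClique.exists_isMaxClutterClique_superset {T : Finset (Fin n)}
    (hT : IsClutterClique n d C T) : ∃ S, IsMaxClutterClique n d C S ∧ T ⊆ S := by
  obtain ⟨S, hTS, hS⟩ := Finite.exists_le_maximal hT
  exact ⟨S, ⟨hS.prop, fun U hU hSU => le_antisymm hSU (hS.le_of_ge hU hSU)⟩, hTS⟩

open scoped Classical in
noncomputable def cliqueExtenders (n d : ℕ) (C : Finset (Finset (Fin n))) (e : Finset (Fin n)) :
    Finset (Fin n) :=
  univ.filter fun k => IsClutterClique n d C (insert k e)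

theorem mem_cliqueExtenders {e : Finset (Fin n)} {k : Fin n} :
    k ∈ cliqueExtenders n d C e ↔ IsClutterClique n d C (insert k e) := by
  simp [cliqueExtenders]

theorem subset_cliqueExtenders {e T : Finset (Fin n)} (hT : IsClutterClique n d C T)
    (heT : e ⊆ T) : T ⊆ cliqueExtenders n d C e := fun _ hk =>
  mem_cliqueExtenders.2 (hT.subset (insert_subset hk heT))

theorem isExposedCircuit_iff {e : Finset (Fin n)} (heC : e ∈ C)
    (he : IsClutterClique n d C e) :
    IsExposedCircuit n d C e ↔ IsClutterClique n d C (cliqueExtenders n d C e) := by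
  have he_sub : e ⊆ cliqueExtenders n d C e := subset_cliqueExtenders he subset_rfl
  constructor
  · rintro ⟨-, S, ⟨hS, heS⟩, huniq⟩
    refine hS.1.subset fun k hk => ?_
    obtain ⟨S', hS', hkS'⟩ := (mem_cliqueExtenders.1 hk).exists_isMaxClutterClique_superset
    rw [← huniq S' ⟨hS', (subset_insert k e).trans hkS'⟩]
    exact hkS' (mem_insert_self k e)
  · intro hM
    refine ⟨heC, cliqueExtenders n d C e, ⟨⟨hM, fun T hT hMT => ?_⟩, he_sub⟩, ?_⟩
    · exact hMT.antisymm (subset_cliqueExtenders hT (he_sub.trans hMT))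
    · rintro S ⟨hS, heS⟩
      exact hS.2 _ hM (subset_cliqueExtenders hS.1 heS)

theorem not_isClutterClique_union_iff {e : Finset (Fin n)} (he : IsClutterClique n d C e)
    (hM : IsClutterClique n d C (cliqueExtenders n d C e)) (A : Finset (Fin n)) :
    ¬IsClutterClique n d C (A ∪ e) ↔ ∃ k ∈ A, k ∉ cliqueExtenders n d C e := by
  constructor
  · intro hAe
    by_contra! hA
    exact hAe (hM.subset (union_subset hA (subset_cliqueExtenders he subset_rfl)))
  · rintro ⟨k, hkA, hk⟩ hAe
    exact hk (mem_cliqueExtenders.2 (hAe.subset (insert_subset (mem_union_left e hkA)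
      subset_union_right)))

end Cliques

section MonomialIdeals

variable {𝕂 : Type} [Field 𝕂] {n : ℕ}

theorem Finset.toFinsupp_val_le_iff (e : Finset (Fin n)) (μ : Fin n →₀ ℕ) :
    Multiset.toFinsupp e.val ≤ μ ↔ e ⊆ μ.support := by
  rw [Finsupp.le_iff, Multiset.toFinsupp_support, val_toFinset]
  refine forall₂_congr fun k hk => ?_
  rw [Multiset.toFinsupp_apply, Multiset.count_eq_one_of_mem e.nodup hk, Finsupp.mem_support_iff,
    Nat.one_le_iff_ne_zero]

theorem xMon_eq_monomial (e : Finset (Fin n)) :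
    xMon 𝕂 n e = monomial (Multiset.toFinsupp e.val) 1 := by
  rw [← prod_X_pow_eq_monomial, Multiset.toFinsupp_support, val_toFinset, xMon]
  refine prod_congr rfl fun k hk => ?_
  rw [Multiset.toFinsupp_apply, Multiset.count_eq_one_of_mem e.nodup hk, pow_one]

theorem mem_circuitIdeal_iff_s2 (C : Finset (Finset (Fin n))) (p : MvPolynomial (Fin n) 𝕂) :
    p ∈ circuitIdeal 𝕂 n C ↔ ∀ μ ∈ p.support, ∃ e ∈ C, e ⊆ μ.support := by
  have hgens : xMon 𝕂 n '' ↑C =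
      (fun m => monomial m (1 : 𝕂)) ''
        ((fun e : Finset (Fin n) => Multiset.toFinsupp e.val) '' ↑C) := by
    rw [Set.image_image]
    exact Set.image_congr fun e _ => xMon_eq_monomial e
  simp [circuitIdeal, hgens, mem_ideal_span_monomial_image, toFinsupp_val_le_iff]

theorem mem_colon_circuitIdeal_iff (C : Finset (Finset (Fin n))) (m : Fin n →₀ ℕ)
    (p : MvPolynomial (Fin n) 𝕂) :
    p ∈ (circuitIdeal 𝕂 n C).colon (Ideal.span {(monomial m 1 : MvPolynomial (Fin n) 𝕂)}) ↔
      ∀ μ ∈ p.support, ∃ e ∈ C, e ⊆ μ.support ∪ m.support := by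
  have hsupp : (p * monomial m 1).support = p.support.map (addRightEmbedding m) :=
    AddMonoidAlgebra.support_coeff_mul_single p _ (by simp) _
  simp [mem_circuitIdeal_iff_s2, hsupp, Finsupp.support_add_eq_union]

theorem monomial_mem_colon_complClutter_iff (C : Finset (Finset (Fin n)))
    {d : ℕ} (m μ : Fin n →₀ ℕ) :
    monomial μ (1 : 𝕂) ∈ (circuitIdeal 𝕂 n (complClutter n d C)).colon
        (Ideal.span {(monomial m 1 : MvPolynomial (Fin n) 𝕂)}) ↔
      ¬IsClutterClique n d C (μ.support ∪ m.support) := by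
  classical
  rw [mem_colon_circuitIdeal_iff, support_monomial, if_neg one_ne_zero]
  simp [exists_mem_complClutter_subset_iff]

theorem generatedByVariables_colon_iff (C : Finset (Finset (Fin n))) {d : ℕ}
    (m : Fin n →₀ ℕ) (hm : IsClutterClique n d C m.support) :
    GeneratedByVariables 𝕂 n ((circuitIdeal 𝕂 n (complClutter n d C)).colon
        (Ideal.span {(monomial m 1 : MvPolynomial (Fin n) 𝕂)})) ↔
      IsClutterClique n d C (cliqueExtenders n d C m.support) := by
  constructor
  · rintro ⟨S, hS⟩
    refine .inr fun t htM htcard => ?_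
    by_contra htC
    have hxt : xMon 𝕂 n t ∈ Ideal.span ((fun i => (X i : MvPolynomial (Fin n) 𝕂)) '' S) := by
      rw [← hS, xMon_eq_monomial, monomial_mem_colon_complClutter_iff,
        Multiset.toFinsupp_support, val_toFinset, ← exists_mem_complClutter_subset_iff]
      exact ⟨t, by simp [complClutter, htcard, htC], subset_union_left⟩
    rw [xMon_eq_monomial, mem_ideal_span_X_image] at hxt
    obtain ⟨k, hkS, hkt⟩ := hxt (Multiset.toFinsupp t.val) (by simp)
    have hXk : X k ∈ Ideal.span ((fun i => (X i : MvPolynomial (Fin n) 𝕂)) '' S) :=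
      Ideal.subset_span ⟨k, hkS, rfl⟩
    rw [← hS, X, monomial_mem_colon_complClutter_iff, Finsupp.support_single k one_ne_zero,
      singleton_union, ← mem_cliqueExtenders] at hXk
    rw [Multiset.toFinsupp_apply, Multiset.count_ne_zero, mem_val] at hkt
    exact hXk (htM hkt)
  · intro hM
    refine ⟨(cliqueExtenders n d C m.support)ᶜ, ?_⟩
    ext p
    rw [mem_colon_circuitIdeal_iff, mem_ideal_span_X_image]
    refine forall₂_congr fun μ _ => ?_
    rw [exists_mem_complClutter_subset_iff, not_isClutterClique_union_iff hm hM]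
    simp [Finsupp.mem_support_iff, and_comm]

end MonomialIdeals

theorem exposed_edge_iff_linear_divisor_general (n : ℕ) (𝕂 : Type) [Field 𝕂]
    (G : Finset (Finset (Fin n)))
    (i j : Fin n) (hij : i ≠ j) (he : ({i, j} : Finset (Fin n)) ∈ G) :
    IsExposedCircuit n 2 G {i, j} ↔
      GeneratedByVariables 𝕂 n
        (Submodule.colon (circuitIdeal 𝕂 n (complClutter n 2 G))
          (Ideal.span {(X i * X j : MvPolynomial (Fin n) 𝕂)})) := by
  have hXij : (X i * X j : MvPolynomial (Fin n) 𝕂) =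
      monomial (Finsupp.single i 1 + Finsupp.single j 1) 1 := by
    rw [X, X, monomial_mul, one_mul]
  have hsupp : (Finsupp.single i 1 + Finsupp.single j 1 : Fin n →₀ ℕ).support = {i, j} :=
    Finsupp.support_single_add_single hij one_ne_zero one_ne_zero
  have hclique : IsClutterClique n 2 G {i, j} :=
    isClutterClique_of_mem_of_card_eq he (card_pair hij)
  rw [isExposedCircuit_iff he hclique, hXij, generatedByVariables_colon_iff G _ (hsupp ▸ hclique),
    hsupp]

/-- an edge `e = ij` of a graph `G` (a 2-clutter on `[n]`) is exposed
iff `x_i x_j` is a linear divisor for the edge ideal of the complement graph. -/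
theorem exposed_edge_iff_linear_divisor (n : ℕ) (𝕂 : Type) [Field 𝕂]
    (G : Finset (Finset (Fin n))) (hG : ∀ s ∈ G, s.card = 2)
    (i j : Fin n) (hij : i ≠ j) (he : ({i, j} : Finset (Fin n)) ∈ G) :
    IsExposedCircuit n 2 G {i, j} ↔
      GeneratedByVariables 𝕂 n
        (Submodule.colon (circuitIdeal 𝕂 n (complClutter n 2 G))
          (Ideal.span {(X i * X j : MvPolynomial (Fin n) 𝕂)})) :=
  exposed_edge_iff_linear_divisor_general n 𝕂 G i j hij he
end

section
/- Suppose a graph G on [n] is obtained from the complete graph K_n by successively removing edges e_1,…,e_k, where each e_i is exposed in the graph K_n \ {e_1,…,e_{i−1}}. Then G is connected if and only if each e_i is properly exposed in K_n \ {e_1,…,e_{i−1}}. -/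
/-- `S` is a maximal clique of the simple graph `G`. -/
def IsMaxGraphClique {V : Type} (G : SimpleGraph V) (S : Set V) : Prop :=
  G.IsClique S ∧ ∀ T : Set V, G.IsClique T → S ⊆ T → S = T

/-- An edge `e` of `G` is exposed if it is contained in a unique maximal clique of `G`. -/
def IsExposedEdge {V : Type} (G : SimpleGraph V) (e : Sym2 V) : Prop :=
  e ∈ G.edgeSet ∧ ∃! S : Set V, IsMaxGraphClique G S ∧ ∀ v ∈ e, v ∈ S

/-- An edge `e` of `G` is properly exposed if it is exposed and the unique maximal clique
containing it has more than two vertices. -/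
def IsProperlyExposedEdge {V : Type} (G : SimpleGraph V) (e : Sym2 V) : Prop :=
  IsExposedEdge G e ∧
    ∀ S : Set V, IsMaxGraphClique G S → (∀ v ∈ e, v ∈ S) → 2 < S.ncard

/-- One edge erasure step: `H` is obtained from `G` by deleting a properly exposed edge. -/
def EdgeErasureStep {V : Type} (G H : SimpleGraph V) : Prop :=
  ∃ e, IsProperlyExposedEdge G e ∧ H = G.deleteEdges {e}

/-- `G` is chordal: every cycle of length at least four has a chord, i.e. `G` has no
induced cycle of length four or more. -/
def IsChordalGraph {V : Type} (G : SimpleGraph V) : Prop :=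
  ∀ (v : V) (w : G.Walk v v), w.IsCycle → 4 ≤ w.length →
    ∃ a b : V, a ∈ w.support ∧ b ∈ w.support ∧ G.Adj a b ∧ s(a, b) ∉ w.edges

/-! A graph satisfies `DetoursHitCommonNeighbors` if every walk joining the ends of an edge `uv`
without using `uv` passes through a common neighbor of `u` and `v`. Complete graphs do, and deleting
an exposed edge `f` preserves the property: if a detour around `uv` meets a common neighbor `x` only
through `f = ux`, then `v` lies in the unique maximal clique `S` of `f`, and the part of the detour
from `u` to `x` (which avoids `v` once the detour is a path) is a detour around `ux`, so it meets a
common neighbor `y` of `u` and `x`; then `y ∈ S` as well, so `y` is adjacent to `v`.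

In such a graph an exposed edge `uv` is properly exposed iff `u` and `v` have a common neighbor iff
`uv` is not a bridge, so along the deletion sequence every edge is properly exposed exactly when no
deletion disconnects the graph. -/

open SimpleGraph

variable {V : Type} {G : SimpleGraph V} {f : Sym2 V} {u v w x : V}

lemma SimpleGraph.IsClique.exists_isMaxGraphClique_superset [Finite V] {A : Set V}
    (hA : G.IsClique A) : ∃ S, IsMaxGraphClique G S ∧ A ⊆ S := by
  obtain ⟨S, hAS, hS⟩ := Finite.exists_le_maximal hA
  exact ⟨S, ⟨hS.prop, fun _ hT => hS.eq_of_subset hT⟩, hAS⟩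

lemma IsExposedEdge.mem_of_adj [Finite V] {S : Set V} (hf : IsExposedEdge G s(u, v))
    (hS : IsMaxGraphClique G S) (hu : u ∈ S) (hv : v ∈ S) (huw : G.Adj u w) (hvw : G.Adj v w) :
    w ∈ S := by
  have htriangle : G.IsClique {u, v, w} := by
    refine isClique_insert.2 ⟨isClique_pair.2 fun _ => hvw, ?_⟩
    rintro _ (rfl | rfl) -
    exacts [hf.1, huw]
  obtain ⟨T, hT, huvwT⟩ := htriangle.exists_isMaxGraphClique_superset
  have hTS : T = S := hf.2.unique
    ⟨hT, Sym2.forall_mem_pair.2 ⟨huvwT (by simp), huvwT (by simp)⟩⟩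
    ⟨hS, Sym2.forall_mem_pair.2 ⟨hu, hv⟩⟩
  exact hTS ▸ huvwT (by simp)

lemma IsExposedEdge.isProperlyExposedEdge_iff [Finite V] (hf : IsExposedEdge G s(u, v)) :
    IsProperlyExposedEdge G s(u, v) ↔ ∃ w, G.Adj u w ∧ G.Adj w v := by
  constructor
  · rintro ⟨-, hcard⟩
    obtain ⟨S, ⟨hS, huvS⟩, -⟩ := hf.2
    obtain ⟨huS, hvS⟩ := Sym2.forall_mem_pair.1 huvS
    have hpair : ({u, v} : Set V).ncard < S.ncard := by
      rw [Set.ncard_pair hf.1.ne]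
      exact hcard S hS huvS
    obtain ⟨w, hwS, hw⟩ := Set.exists_mem_notMem_of_ncard_lt_ncard hpair
    simp only [Set.mem_insert_iff, Set.mem_singleton_iff, not_or] at hw
    exact ⟨w, hS.1 huS hwS (Ne.symm hw.1), hS.1 hwS hvS hw.2⟩
  · rintro ⟨w, huw, hwv⟩
    refine ⟨hf, fun S hS huvS => ?_⟩
    obtain ⟨huS, hvS⟩ := Sym2.forall_mem_pair.1 huvS
    have hwS : w ∈ S := hf.mem_of_adj hS huS hvS huw hwv.symm
    calc 2 < 3 := by norm_num
      _ = ({u, v, w} : Set V).ncard :=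
          (Set.ncard_eq_three.2 ⟨u, v, w, hf.1.ne, huw.ne, hwv.ne', rfl⟩).symm
      _ ≤ S.ncard := Set.ncard_le_ncard (by simp [Set.insert_subset_iff, huS, hvS, hwS])

lemma SimpleGraph.Connected.deleteEdges_of_isProperlyExposedEdge [Finite V] (hG : G.Connected)
    (hf : IsProperlyExposedEdge G f) : (G.deleteEdges {f}).Connected := by
  induction f using Sym2.ind with
  | _ u v =>
  obtain ⟨w, huw, hwv⟩ := hf.1.isProperlyExposedEdge_iff.1 hf
  refine hG.connected_delete_edge_of_not_isBridge (isBridge_iff.not_left.2 ?_)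
  have huw' : (G.deleteEdges {s(u, v)}).Adj u w :=
    deleteEdges_adj.2 ⟨huw, by simp [huw.ne', hwv.ne]⟩
  have hwv' : (G.deleteEdges {s(u, v)}).Adj w v :=
    deleteEdges_adj.2 ⟨hwv, by simp [huw.ne', hwv.ne]⟩
  exact huw'.reachable.trans hwv'.reachable

def DetoursHitCommonNeighbors (G : SimpleGraph V) : Prop :=
  ∀ ⦃u v : V⦄, G.Adj u v → ∀ P : (G.deleteEdges {s(u, v)}).Walk u v,
    ∃ x ∈ P.support, G.Adj u x ∧ G.Adj x v

lemma detoursHitCommonNeighbors_top : DetoursHitCommonNeighbors (⊤ : SimpleGraph V) := by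
  intro u v huv P
  cases P with
  | nil => exact absurd rfl huv.ne
  | @cons _ x _ hux _ =>
    refine ⟨x, by simp, (deleteEdges_adj.1 hux).1, ?_⟩
    rintro rfl
    exact (deleteEdges_adj.1 hux).2 rfl

namespace DetoursHitCommonNeighbors

lemma isProperlyExposedEdge_of_preconnected [Finite V] (hG : DetoursHitCommonNeighbors G)
    (hf : IsExposedEdge G f) (hconn : (G.deleteEdges {f}).Preconnected) :
    IsProperlyExposedEdge G f := by
  induction f using Sym2.ind with
  | _ u v =>
  obtain ⟨P⟩ := hconn u v
  obtain ⟨w, -, hw⟩ := hG hf.1 P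
  exact hf.isProperlyExposedEdge_iff.2 ⟨w, hw⟩

lemma exists_adj_deleteEdges_of_mem_path [Finite V] (hG : DetoursHitCommonNeighbors G)
    (hf : IsExposedEdge G f) (hux : s(u, x) = f) (huv : G.Adj u v) (hxv : G.Adj x v)
    (R : (G.deleteEdges {f}).Walk u v) (hR : R.IsPath) (hx : x ∈ R.support) :
    ∃ y ∈ R.support, (G.deleteEdges {f}).Adj u y ∧ (G.deleteEdges {f}).Adj y v := by
  classical
  subst hux
  obtain ⟨S, ⟨hS, huxS⟩, -⟩ := hf.2
  obtain ⟨huS, hxS⟩ := Sym2.forall_mem_pair.1 huxS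
  have hvS : v ∈ S := hf.mem_of_adj hS huS hxS huv hxv
  have hvQ : v ∉ (R.takeUntil x hx).support := R.endpoint_notMem_support_takeUntil hR hx hxv.ne'
  obtain ⟨y, hyQ, huy, hyx⟩ := hG hf.1 (R.takeUntil x hx)
  have hyS : y ∈ S := hf.mem_of_adj hS huS hxS huy hyx.symm
  have hyv : y ≠ v := fun h => hvQ (h ▸ hyQ)
  refine ⟨y, R.support_takeUntil_subset_support hx hyQ, deleteEdges_adj.2 ⟨huy, ?_⟩,
    deleteEdges_adj.2 ⟨hS.1 hyS hvS hyv, ?_⟩⟩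
  all_goals simp [huy.ne', hyx.ne]

lemma deleteEdges [Finite V] (hG : DetoursHitCommonNeighbors G) (hf : IsExposedEdge G f) :
    DetoursHitCommonNeighbors (G.deleteEdges {f}) := by
  classical
  intro u v huv P
  have huv' : G.Adj u v := (deleteEdges_adj.1 huv).1
  let R : (G.deleteEdges {f}).Walk u v := P.bypass.mapLe (deleteEdges_le _)
  have hR : R.IsPath := P.bypass_isPath.mapLe _
  have hRP : R.support ⊆ P.support := by simpa [R] using P.support_bypass_subset_support
  obtain ⟨x, hxR, hux, hxv⟩ := hG huv' (P.bypass.mapLe (deleteEdges_mono (deleteEdges_le _)))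
  replace hxR : x ∈ R.support := by simpa [R] using hxR
  by_cases hfux : s(u, x) = f
  · obtain ⟨y, hy, hyv⟩ := hG.exists_adj_deleteEdges_of_mem_path hf hfux huv' hxv R hR hxR
    exact ⟨y, hRP hy, hyv⟩
  by_cases hfxv : s(x, v) = f
  · obtain ⟨y, hy, hvy, hyu⟩ := hG.exists_adj_deleteEdges_of_mem_path hf
      (Sym2.eq_swap.trans hfxv) huv'.symm hux.symm R.reverse hR.reverse (by simpa using hxR)
    exact ⟨y, hRP (by simpa using hy), hyu.symm, hvy.symm⟩
  exact ⟨x, hRP hxR, deleteEdges_adj.2 ⟨hux, hfux⟩, deleteEdges_adj.2 ⟨hxv, hfxv⟩⟩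

end DetoursHitCommonNeighbors

section DeletionSequence

variable {k : ℕ} (G) (e : Fin k → Sym2 V)

lemma deleteEdges_image_lt_succ (i : Fin k) :
    G.deleteEdges (e '' {j | (j : ℕ) < i + 1}) =
      (G.deleteEdges (e '' {j | j < i})).deleteEdges {e i} := by
  rw [deleteEdges_deleteEdges, ← Set.image_singleton, ← Set.image_union]
  congr 2
  ext j
  simp only [Set.mem_ofPred_eq, Set.mem_union, Set.mem_singleton_iff, Fin.lt_def, Fin.ext_iff]
  omega

lemma deleteEdges_image_lt_induction {P : SimpleGraph V → Prop} (h₀ : P G)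
    (hstep : ∀ i : Fin k, P (G.deleteEdges (e '' {j | j < i})) →
      P ((G.deleteEdges (e '' {j | j < i})).deleteEdges {e i})) :
    ∀ m ≤ k, P (G.deleteEdges (e '' {j | (j : ℕ) < m})) := by
  intro m hm
  induction m with
  | zero => simpa using h₀
  | succ m ih =>
    have := hstep ⟨m, hm⟩ (ih (by omega))
    rwa [← deleteEdges_image_lt_succ] at this

end DeletionSequence

/-- if `G` is obtained from `K_n` by successively removing edges
`e_1,…,e_k`, each `e_i` exposed in `K_n \ {e_1,…,e_{i-1}}`, then `G` is connected iff
each `e_i` is properly exposed in `K_n \ {e_1,…,e_{i-1}}`. -/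
theorem connected_iff_all_properly_exposed (n k : ℕ) (hn : 0 < n)
    (e : Fin k → Sym2 (Fin n))
    (hexp : ∀ i : Fin k,
      IsExposedEdge ((⊤ : SimpleGraph (Fin n)).deleteEdges (e '' {j : Fin k | j < i})) (e i)) :
    ((⊤ : SimpleGraph (Fin n)).deleteEdges (Set.range e)).Connected ↔
      ∀ i : Fin k,
        IsProperlyExposedEdge
          ((⊤ : SimpleGraph (Fin n)).deleteEdges (e '' {j : Fin k | j < i})) (e i) := by
  constructor
  · intro hconn i
    have hdetours : DetoursHitCommonNeighbors
        ((⊤ : SimpleGraph (Fin n)).deleteEdges (e '' {j : Fin k | j < i})) :=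
      deleteEdges_image_lt_induction ⊤ e detoursHitCommonNeighbors_top
        (fun j hj => hj.deleteEdges (hexp j)) i i.is_lt.le
    refine hdetours.isProperlyExposedEdge_of_preconnected (hexp i) (hconn.preconnected.mono ?_)
    rw [deleteEdges_deleteEdges]
    exact deleteEdges_anti (Set.union_subset (Set.image_subset_range _ _)
      (Set.singleton_subset_iff.2 (Set.mem_range_self i)))
  · intro hprop
    have : Nonempty (Fin n) := Fin.pos_iff_nonempty.mp hn
    simpa using deleteEdges_image_lt_induction ⊤ e connected_top
      (fun i hi => hi.deleteEdges_of_isProperlyExposedEdge (hprop i)) k le_rfl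
end

section
/- Let e_1,…,e_k be distinct 2-element subsets of [n] and set F_i = [n] \ e_i. Then each e_i is exposed in the graph K_n \ {e_1,…,e_{i−1}} (for i = 1,…,k) if and only if F_1,…,F_k is a shelling order of the pure (n−3)-dimensional simplicial complex with facets F_1,…,F_k; moreover, in this case e_i is properly exposed in K_n \ {e_1,…,e_{i−1}} if and only if the restricted set of F_i has fewer than n − 2 elements. -/
open Finset

/-- The graph `K_n \ {e_1, …, e_{j-1}}`, as a 2-clutter (`d`-clutter). -/
def clutterUpTo (n d k : ℕ) (e : Fin k → Finset (Fin n)) (j : Fin k) :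
    Finset (Finset (Fin n)) :=
  (Finset.powersetCard d (Finset.univ : Finset (Fin n))).filter
    (fun s => ∀ i : Fin k, i < j → e i ≠ s)

/-- `F 0, F 1, …` is a shelling order: for all `i < j` there are `ℓ < j` and `v ∈ F j`
with `F i ∩ F j ⊆ F ℓ ∩ F j = F j \ {v}`. -/
def IsShellingOrder (n s : ℕ) (F : Fin s → Finset (Fin n)) : Prop :=
  ∀ j i : Fin s, i < j → ∃ ℓ : Fin s, ℓ < j ∧ ∃ v ∈ F j,
    F i ∩ F j ⊆ F ℓ ∩ F j ∧ F ℓ ∩ F j = (F j).erase v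

/-- The restricted set of `F j`: all sets `F j \ {v}`, `v ∈ F j`, contained in some
earlier facet `F i`, `i < j`. -/
def restrictedSet (n s : ℕ) (F : Fin s → Finset (Fin n)) (j : Fin s) :
    Finset (Finset (Fin n)) :=
  ((F j).image (fun v => (F j).erase v)).filter (fun G => ∃ i : Fin s, i < j ∧ G ⊆ F i)

namespace Aux
variable {n k : ℕ} {e : Fin k → Finset (Fin n)}

lemma mem_clutter {j : Fin k} {s : Finset (Fin n)} :
    s ∈ clutterUpTo n 2 k e j ↔ s.card = 2 ∧ ∀ i, i < j → e i ≠ s := by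
  simp [clutterUpTo, Finset.mem_powersetCard, Finset.subset_univ, and_comm]

lemma pair_eq {s : Finset (Fin n)} (hs : s.card = 2) {u w : Fin n}
    (hu : u ∈ s) (hw : w ∈ s) (huw : u ≠ w) : ({u, w} : Finset (Fin n)) = s :=
  Finset.eq_of_subset_of_card_le (by simp [Finset.insert_subset_iff, hu, hw])
    (by rw [Finset.card_pair huw, hs])

lemma clique_iff {C : Finset (Finset (Fin n))} {S : Finset (Fin n)} :
    IsClutterClique n 2 C S ↔ ∀ u ∈ S, ∀ w ∈ S, u ≠ w → ({u, w} : Finset (Fin n)) ∈ C := by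
  constructor
  · rintro (h | h) u hu w hw huw
    · exfalso
      have h2 : ({u, w} : Finset (Fin n)).card ≤ S.card :=
        Finset.card_le_card (by simp [Finset.insert_subset_iff, hu, hw])
      rw [Finset.card_pair huw] at h2; omega
    · exact h _ (by simp [Finset.insert_subset_iff, hu, hw]) (Finset.card_pair huw)
  · intro h
    right
    intro t ht htc
    obtain ⟨u, w, huw, rfl⟩ := Finset.card_eq_two.mp htc
    exact h u (ht (by simp)) w (ht (by simp)) huw

lemma exists_max {C : Finset (Finset (Fin n))} {S : Finset (Fin n)}
    (h : IsClutterClique n 2 C S) : ∃ M, IsMaxClutterClique n 2 C M ∧ S ⊆ M := by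
  classical
  obtain ⟨M, hM, hmax⟩ := Finset.exists_max_image
      ((Finset.univ : Finset (Finset (Fin n))).filter
        (fun T => IsClutterClique n 2 C T ∧ S ⊆ T)) Finset.card
      ⟨S, by simp [h]⟩
  simp only [Finset.mem_filter, Finset.mem_univ, true_and] at hM
  refine ⟨M, ⟨hM.1, ?_⟩, hM.2⟩
  intro T hT hMT
  exact Finset.eq_of_subset_of_card_le hMT (hmax T (by simp [hT, hM.2.trans hMT]))

def goodP (e : Fin k → Finset (Fin n)) (j : Fin k) : Prop :=
  ∀ i, i < j → e i ∩ e j = ∅ →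
    ∃ ℓ, ℓ < j ∧ ∃ x ∈ e j, ∃ y ∈ e i, e ℓ = {x, y}

lemma clique_ej (hinj : Function.Injective e) (hcard : ∀ i, (e i).card = 2) (j : Fin k) :
    IsClutterClique n 2 (clutterUpTo n 2 k e j) (e j) := by
  rw [clique_iff]
  intro u hu w hw huw
  rw [pair_eq (hcard j) hu hw huw]
  exact mem_clutter.mpr ⟨hcard j, fun i hij => fun hh => absurd (hinj hh) (Fin.ne_of_lt hij)⟩

lemma ej_mem (hinj : Function.Injective e) (hcard : ∀ i, (e i).card = 2) (j : Fin k) :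
    e j ∈ clutterUpTo n 2 k e j :=
  mem_clutter.mpr ⟨hcard j, fun i hij => fun hh => absurd (hinj hh) (Fin.ne_of_lt hij)⟩

lemma clique_insert (hinj : Function.Injective e) (hcard : ∀ i, (e i).card = 2)
    {j : Fin k} {v : Fin n} (hv : v ∉ e j)
    (h : ∀ ℓ, ℓ < j → ∀ x ∈ e j, e ℓ ≠ {x, v}) :
    IsClutterClique n 2 (clutterUpTo n 2 k e j) (insert v (e j)) := by
  rw [clique_iff]
  intro u hu w hw huw
  rcases Finset.mem_insert.mp hu with rfl | hu
  · rcases Finset.mem_insert.mp hw with rfl | hw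
    · exact absurd rfl huw
    · refine mem_clutter.mpr ⟨Finset.card_pair huw, fun i hij hh => ?_⟩
      exact h i hij w hw (hh.trans (Finset.pair_comm u w))
  · rcases Finset.mem_insert.mp hw with hwv | hw
    · refine mem_clutter.mpr ⟨Finset.card_pair huw, fun i hij hh => ?_⟩
      rw [hwv] at hh
      exact h i hij u hu hh
    · rw [pair_eq (hcard j) hu hw huw]
      exact ej_mem hinj hcard j

lemma exposed_iff (hinj : Function.Injective e) (hcard : ∀ i, (e i).card = 2) (j : Fin k) :
    IsExposedCircuit n 2 (clutterUpTo n 2 k e j) (e j) ↔ goodP e j := by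
  constructor
  · rintro ⟨-, M, ⟨hM, hejM⟩, huniq⟩ i hij hdisj
    by_contra hcon
    push_neg at hcon
    obtain ⟨c, d, hcd, hei⟩ := Finset.card_eq_two.mp (hcard i)
    have hc : c ∈ e i := by rw [hei]; simp
    have hd : d ∈ e i := by rw [hei]; simp
    have hcj : c ∉ e j := fun hh => by
      have := Finset.mem_inter.mpr ⟨hc, hh⟩; rw [hdisj] at this; exact absurd this (by simp)
    have hdj : d ∉ e j := fun hh => by
      have := Finset.mem_inter.mpr ⟨hd, hh⟩; rw [hdisj] at this; exact absurd this (by simp)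
    have hc1 : IsClutterClique n 2 (clutterUpTo n 2 k e j) (insert c (e j)) :=
      clique_insert hinj hcard hcj (fun ℓ hℓ x hx => hcon ℓ hℓ x hx c hc)
    have hd1 : IsClutterClique n 2 (clutterUpTo n 2 k e j) (insert d (e j)) :=
      clique_insert hinj hcard hdj (fun ℓ hℓ x hx => hcon ℓ hℓ x hx d hd)
    obtain ⟨M1, hM1, hsub1⟩ := exists_max hc1
    obtain ⟨M2, hM2, hsub2⟩ := exists_max hd1
    have e1 : M1 = M := huniq M1 ⟨hM1, (Finset.subset_insert _ _).trans hsub1⟩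
    have e2 : M2 = M := huniq M2 ⟨hM2, (Finset.subset_insert _ _).trans hsub2⟩
    have hcM : c ∈ M := e1 ▸ hsub1 (Finset.mem_insert_self _ _)
    have hdM : d ∈ M := e2 ▸ hsub2 (Finset.mem_insert_self _ _)
    have : ({c, d} : Finset (Fin n)) ∈ clutterUpTo n 2 k e j :=
      clique_iff.mp hM.1 c hcM d hdM hcd
    exact (mem_clutter.mp this).2 i hij hei
  · intro hP
    refine ⟨ej_mem hinj hcard j, ?_⟩
    obtain ⟨M, hM, hsub⟩ := exists_max (clique_ej hinj hcard j)
    have key : ∀ T, IsMaxClutterClique n 2 (clutterUpTo n 2 k e j) T → e j ⊆ T → T = M := by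
      intro T hT hejT
      have hedge : ∀ u ∈ T, ∀ w ∈ M, u ≠ w →
          ({u, w} : Finset (Fin n)) ∈ clutterUpTo n 2 k e j := by
        intro u hu w hw huw
        by_cases huM : u ∈ M
        · exact clique_iff.mp hM.1 u huM w hw huw
        by_cases hwT : w ∈ T
        · exact clique_iff.mp hT.1 u hu w hwT huw
        have huj : u ∉ e j := fun hh => huM (hsub hh)
        have hwj : w ∉ e j := fun hh => hwT (hejT hh)
        refine mem_clutter.mpr ⟨Finset.card_pair huw, fun i hij hh => ?_⟩
        have hdisj : e i ∩ e j = ∅ := by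
          rw [hh]
          ext z
          simp only [Finset.mem_inter, Finset.mem_insert, Finset.mem_singleton,
            Finset.notMem_empty, iff_false, not_and]
          rintro (rfl | rfl) <;> [exact huj; exact hwj]
        obtain ⟨ℓ, hℓ, x, hx, y, hy, hel⟩ := hP i hij hdisj
        rw [hh] at hy
        rcases Finset.mem_insert.mp hy with rfl | hy
        · have : ({x, y} : Finset (Fin n)) ∈ clutterUpTo n 2 k e j :=
            clique_iff.mp hT.1 x (hejT hx) y hu (fun hxy => huj (hxy ▸ hx))
          exact (mem_clutter.mp this).2 ℓ hℓ hel
        · rw [Finset.mem_singleton] at hy; subst hy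
          have : ({x, y} : Finset (Fin n)) ∈ clutterUpTo n 2 k e j :=
            clique_iff.mp hM.1 x (hsub hx) y hw (fun hxy => hwj (hxy ▸ hx))
          exact (mem_clutter.mp this).2 ℓ hℓ hel
      have hcl : IsClutterClique n 2 (clutterUpTo n 2 k e j) (T ∪ M) := by
        rw [clique_iff]
        intro u hu w hw huw
        rcases Finset.mem_union.mp hu with hu' | hu'
        · rcases Finset.mem_union.mp hw with hw' | hw'
          · exact clique_iff.mp hT.1 u hu' w hw' huw
          · exact hedge u hu' w hw' huw
        · rcases Finset.mem_union.mp hw with hw' | hw'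
          · rw [Finset.pair_comm]; exact hedge w hw' u hu' huw.symm
          · exact clique_iff.mp hM.1 u hu' w hw' huw
      have hT' : T = T ∪ M := hT.2 _ hcl Finset.subset_union_left
      have hM' : M = T ∪ M := hM.2 _ hcl Finset.subset_union_right
      exact hT'.trans hM'.symm
    exact ⟨M, ⟨hM, hsub⟩, fun T hT => key T hT.1 hT.2⟩

lemma sdiff_univ_inj {a b : Finset (Fin n)} (h : univ \ a = univ \ b) : a = b := by
  ext z
  have hz := Finset.ext_iff.mp h z
  simp only [Finset.mem_sdiff, Finset.mem_univ, true_and] at hz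
  tauto

lemma sdiff_univ_subset_iff {a b : Finset (Fin n)} :
    univ \ a ⊆ univ \ b ↔ b ⊆ a := by
  constructor
  · intro h z hz
    by_contra hza
    have : z ∈ univ \ a := by simp [hza]
    have := h this
    simp [hz] at this
  · exact fun h => Finset.sdiff_subset_sdiff (Finset.Subset.refl _) h

lemma inter_sdiff_univ (s t : Finset (Fin n)) :
    (univ \ s) ∩ (univ \ t) = univ \ (s ∪ t) := by
  ext z
  simp only [Finset.mem_inter, Finset.mem_sdiff, Finset.mem_univ, Finset.mem_union, true_and]
  tauto

lemma erase_sdiff_univ (t : Finset (Fin n)) (v : Fin n) :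
    (univ \ t).erase v = univ \ insert v t := by
  ext z
  simp only [Finset.mem_erase, Finset.mem_sdiff, Finset.mem_univ, Finset.mem_insert, true_and]
  tauto

lemma sdiff_card_one {s t : Finset (Fin n)} (hs : s.card = 2) (ht : t.card = 2)
    (hne : s ≠ t) (hint : s ∩ t ≠ ∅) : (s \ t).card = 1 := by
  have h1 : (s \ t).card + (s ∩ t).card = s.card := Finset.card_sdiff_add_card_inter s t
  have h3 : (s ∩ t).card ≠ 0 := fun hc => hint (Finset.card_eq_zero.mp hc)
  have h2 : (s ∩ t).card ≠ 2 := by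
    intro hc
    apply hne
    have hst : s ∩ t = s := Finset.eq_of_subset_of_card_le Finset.inter_subset_left (by omega)
    have hsub : s ⊆ t := by rw [← hst]; exact Finset.inter_subset_right
    exact Finset.eq_of_subset_of_card_le hsub (by omega)
  omega

lemma shelling_iff (hinj : Function.Injective e) (hcard : ∀ i, (e i).card = 2) :
    IsShellingOrder n k (fun i => Finset.univ \ e i) ↔ ∀ j, goodP e j := by
  constructor
  · intro h j i hij hdisj
    obtain ⟨ℓ, hℓ, v, hvF, hsubset, heq⟩ := h j i hij
    simp only [Finset.mem_sdiff, Finset.mem_univ, true_and] at hvF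
    rw [inter_sdiff_univ, erase_sdiff_univ] at heq
    have hunion : e ℓ ∪ e j = insert v (e j) := sdiff_univ_inj heq
    rw [inter_sdiff_univ, inter_sdiff_univ] at hsubset
    have hsub2 : e ℓ ⊆ e i ∪ e j :=
      Finset.union_subset_iff.mp (sdiff_univ_subset_iff.mp hsubset) |>.1
    have hvℓ : v ∈ e ℓ := by
      have : v ∈ e ℓ ∪ e j := by rw [hunion]; exact Finset.mem_insert_self _ _
      rcases Finset.mem_union.mp this with h' | h'
      · exact h'
      · exact absurd h' hvF
    have hvi : v ∈ e i := by
      rcases Finset.mem_union.mp (hsub2 hvℓ) with h' | h'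
      · exact h'
      · exact absurd h' hvF
    obtain ⟨p, q, hpq, hel⟩ := Finset.card_eq_two.mp (hcard ℓ)
    have hsubins : e ℓ ⊆ insert v (e j) := by
      rw [← hunion]; exact Finset.subset_union_left
    rw [hel] at hvℓ hsubins
    rcases Finset.mem_insert.mp hvℓ with rfl | hq
    · -- v = p
      have hqj : q ∈ e j := by
        have := hsubins (by simp : q ∈ ({v, q} : Finset (Fin n)))
        rcases Finset.mem_insert.mp this with rfl | h'
        · exact absurd rfl hpq
        · exact h'
      exact ⟨ℓ, hℓ, q, hqj, v, hvi, hel.trans (Finset.pair_comm v q)⟩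
    · rw [Finset.mem_singleton] at hq
      subst hq
      have hpj : p ∈ e j := by
        have := hsubins (by simp : p ∈ ({p, v} : Finset (Fin n)))
        rcases Finset.mem_insert.mp this with rfl | h'
        · exact absurd rfl hpq
        · exact h'
      exact ⟨ℓ, hℓ, p, hpj, v, hvi, hel⟩
  · intro h j i hij
    by_cases hd : e i ∩ e j = ∅
    · obtain ⟨ℓ, hℓ, x, hx, y, hy, hel⟩ := h j i hij hd
      have hyj : y ∉ e j := fun hh => by
        have := Finset.mem_inter.mpr ⟨hy, hh⟩
        rw [hd] at this; exact absurd this (by simp)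
      refine ⟨ℓ, hℓ, y, by simp [hyj], ?_, ?_⟩
      · simp only
        rw [inter_sdiff_univ, inter_sdiff_univ]
        apply Finset.sdiff_subset_sdiff (Finset.Subset.refl _)
        apply Finset.union_subset _ Finset.subset_union_right
        rw [hel]
        intro z hz
        rcases Finset.mem_insert.mp hz with rfl | hz'
        · exact Finset.mem_union_right _ hx
        · rw [Finset.mem_singleton] at hz'; subst hz'
          exact Finset.mem_union_left _ hy
      · simp only
        rw [inter_sdiff_univ, erase_sdiff_univ]
        congr 1
        rw [hel]
        ext z
        simp only [Finset.mem_union, Finset.mem_insert, Finset.mem_singleton]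
        constructor
        · rintro ((rfl | rfl) | hz)
          · exact Or.inr hx
          · exact Or.inl rfl
          · exact Or.inr hz
        · rintro (rfl | hz)
          · exact Or.inl (Or.inr rfl)
          · exact Or.inr hz
    · have hne : e i ≠ e j := fun hh => absurd (hinj hh) (Fin.ne_of_lt hij)
      obtain ⟨v, hv⟩ := Finset.card_eq_one.mp (sdiff_card_one (hcard i) (hcard j) hne hd)
      have hvmem : v ∈ e i \ e j := by rw [hv]; simp
      rw [Finset.mem_sdiff] at hvmem
      refine ⟨i, hij, v, by simp [hvmem.2], Finset.Subset.refl _, ?_⟩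
      simp only
      rw [inter_sdiff_univ, erase_sdiff_univ]
      congr 1
      rw [← Finset.sdiff_union_self_eq_union, hv, Finset.insert_eq]

def Q (e : Fin k → Finset (Fin n)) (j : Fin k) : Prop :=
  ∃ v, v ∉ e j ∧ ∀ ℓ, ℓ < j → ∀ x ∈ e j, e ℓ ≠ {x, v}

lemma subset_insert_iff_pair (hcard : ∀ i, (e i).card = 2) {i j : Fin k} {v : Fin n}
    (hne : e i ≠ e j) (hvj : v ∉ e j) :
    e i ⊆ insert v (e j) ↔ ∃ x ∈ e j, e i = {x, v} := by
  constructor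
  · intro hsub
    obtain ⟨p, q, hpq, hei⟩ := Finset.card_eq_two.mp (hcard i)
    rw [hei] at hsub
    have hp := hsub (by simp : p ∈ ({p, q} : Finset (Fin n)))
    have hq := hsub (by simp : q ∈ ({p, q} : Finset (Fin n)))
    rcases Finset.mem_insert.mp hp with rfl | hpj
    · rcases Finset.mem_insert.mp hq with rfl | hqj
      · exact absurd rfl hpq
      · exact ⟨q, hqj, hei.trans (Finset.pair_comm p q)⟩
    · rcases Finset.mem_insert.mp hq with rfl | hqj
      · exact ⟨p, hpj, hei⟩
      · exfalso
        apply hne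
        rw [hei]
        exact pair_eq (hcard j) hpj hqj hpq
  · rintro ⟨x, hx, hei⟩
    rw [hei]
    exact Finset.insert_subset (Finset.mem_insert_of_mem hx) (by simp)

lemma restricted_iff (hinj : Function.Injective e) (hcard : ∀ i, (e i).card = 2) (j : Fin k) :
    (restrictedSet n k (fun i => Finset.univ \ e i) j).card < n - 2 ↔ Q e j := by
  classical
  have hFcard : (Finset.univ \ e j : Finset (Fin n)).card = n - 2 := by
    rw [Finset.card_sdiff_of_subset (Finset.subset_univ _), Finset.card_univ, Fintype.card_fin, hcard j]
  have hrw : restrictedSet n k (fun i => Finset.univ \ e i) j =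
      ((Finset.univ \ e j).filter
        (fun v => ∃ i : Fin k, i < j ∧ (Finset.univ \ e j).erase v ⊆ Finset.univ \ e i)).image
        (fun v => (Finset.univ \ e j).erase v) := by
    rw [restrictedSet, Finset.filter_image]
  have hcardeq : (restrictedSet n k (fun i => Finset.univ \ e i) j).card =
      ((Finset.univ \ e j).filter
        (fun v => ∃ i : Fin k, i < j ∧ (Finset.univ \ e j).erase v ⊆ Finset.univ \ e i)).card := by
    rw [hrw]
    apply Finset.card_image_of_injOn
    exact Set.InjOn.mono (fun x hx => Finset.mem_of_mem_filter x hx) (Finset.erase_injOn _)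
  rw [hcardeq, ← hFcard]
  constructor
  · intro hlt
    by_contra hq
    have hall : ∀ v ∈ Finset.univ \ e j,
        ∃ i : Fin k, i < j ∧ (Finset.univ \ e j).erase v ⊆ Finset.univ \ e i := by
      intro v hv
      simp only [Finset.mem_sdiff, Finset.mem_univ, true_and] at hv
      by_contra hnp
      apply hq
      refine ⟨v, hv, ?_⟩
      intro ℓ hℓ x hx hel
      apply hnp
      refine ⟨ℓ, hℓ, ?_⟩
      rw [erase_sdiff_univ, sdiff_univ_subset_iff]
      exact (subset_insert_iff_pair hcard
        (fun hh => absurd (hinj hh) (Fin.ne_of_lt hℓ)) hv).mpr ⟨x, hx, hel⟩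
    rw [Finset.filter_true_of_mem hall] at hlt
    omega
  · rintro ⟨v, hvj, hQ⟩
    apply Finset.card_lt_card
    refine Finset.ssubset_iff_of_subset (Finset.filter_subset _ _) |>.mpr ⟨v, by simp [hvj], ?_⟩
    simp only [Finset.mem_filter, Finset.mem_sdiff, Finset.mem_univ, true_and, not_and]
    intro _
    rintro ⟨i, hij, hsub⟩
    rw [erase_sdiff_univ, sdiff_univ_subset_iff] at hsub
    obtain ⟨x, hx, hei⟩ := (subset_insert_iff_pair hcard
      (fun hh => absurd (hinj hh) (Fin.ne_of_lt hij)) hvj).mp hsub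
    exact hQ i hij x hx hei

lemma proper_iff (hinj : Function.Injective e) (hcard : ∀ i, (e i).card = 2) (j : Fin k)
    (hexp : IsExposedCircuit n 2 (clutterUpTo n 2 k e j) (e j)) :
    IsProperlyExposedCircuit n 2 (clutterUpTo n 2 k e j) (e j) ↔ Q e j := by
  obtain ⟨-, M, ⟨hM, hsub⟩, huniq⟩ := hexp
  constructor
  · rintro ⟨-, hall⟩
    have h2 : 2 < M.card := hall M hM hsub
    have hne : (M \ e j).Nonempty := by
      rw [← Finset.card_pos, Finset.card_sdiff_of_subset hsub, hcard j]
      omega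
    obtain ⟨v, hv⟩ := hne
    rw [Finset.mem_sdiff] at hv
    refine ⟨v, hv.2, ?_⟩
    intro ℓ hℓ x hx hel
    have hxv : x ≠ v := fun hh => hv.2 (hh ▸ hx)
    have : ({x, v} : Finset (Fin n)) ∈ clutterUpTo n 2 k e j :=
      clique_iff.mp hM.1 x (hsub hx) v hv.1 hxv
    exact (mem_clutter.mp this).2 ℓ hℓ hel
  · rintro ⟨v, hvj, hQ⟩
    refine ⟨⟨ej_mem hinj hcard j, M, ⟨hM, hsub⟩, huniq⟩, ?_⟩
    intro S hS hsubS
    obtain ⟨M', hM', hsub'⟩ := exists_max (clique_insert hinj hcard hvj hQ)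
    have e1 : S = M := huniq S ⟨hS, hsubS⟩
    have e2 : M' = M := huniq M' ⟨hM', (Finset.subset_insert _ _).trans hsub'⟩
    have hiS : insert v (e j) ⊆ S := by
      rw [e1, ← e2]
      exact Finset.insert_subset (hsub' (Finset.mem_insert_self _ _))
        ((Finset.subset_insert _ _).trans hsub')
    have h3 : (insert v (e j)).card = 3 := by
      rw [Finset.card_insert_of_notMem hvj, hcard j]
    have := Finset.card_le_card hiS
    omega

end Aux

/-- the edges `e_i` are successively exposed in `K_n \ {e_1,…,e_{i-1}}` iff
the complements `F_i = [n] \ e_i` form a shelling order; and in this case `e_i` is properly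
exposed iff the restricted set of `F_i` has fewer than `n - 2` elements. -/
theorem exposed_edges_iff_shelling (n k : ℕ)
    (e : Fin k → Finset (Fin n)) (hinj : Function.Injective e)
    (hcard : ∀ i, (e i).card = 2) :
    ((∀ i : Fin k, IsExposedCircuit n 2 (clutterUpTo n 2 k e i) (e i)) ↔
        IsShellingOrder n k (fun i => Finset.univ \ e i)) ∧
      ((∀ i : Fin k, IsExposedCircuit n 2 (clutterUpTo n 2 k e i) (e i)) →
        ∀ i : Fin k,
          (IsProperlyExposedCircuit n 2 (clutterUpTo n 2 k e i) (e i) ↔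
            (restrictedSet n k (fun i => Finset.univ \ e i) i).card < n - 2)) := by
  constructor
  · rw [Aux.shelling_iff hinj hcard]
    exact forall_congr' (fun j => Aux.exposed_iff hinj hcard j)
  · intro hexp i
    exact (Aux.proper_iff hinj hcard i (hexp i)).trans
      (Aux.restricted_iff hinj hcard i).symm
end

section
/- For every n and every k with n − 3 ≤ k ≤ n − 1, the k-skeleton of the simplex on vertex set [n] — the pure k-dimensional simplicial complex whose facets are all (k+1)-element subsets of [n] — is extendably shellable. -/
/-!
For `k ≥ n - 2` any two distinct facets `A`, `B` satisfy `A ∩ B = B \ {v}` for some `v`,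
so every ordering of the facets is a shelling and extendability is automatic.

For `k = n - 3` the facets are the complements `{x, y}ᶜ` of the edges of the complete graph
on `[n]`. Given a partial shelling, let `G` be the graph of edges whose facets have not been
used yet. A facet `{x, y}ᶜ` can be appended exactly when `xy` is a simplicial edge of `G`,
i.e. the common neighbourhood of `x` and `y` in `G` is a clique. Deleting a simplicial edge
preserves Dirac's property (every induced subgraph is complete or has two nonadjacent
simplicial vertices), and a graph with this property and at least one edge has a simplicial
edge. Since `G` starts as the complete graph, every partial shelling can be continued.
-/
open Finset

/-- A family of facets `𝓕` is extendably shellable: every shelling order of a subset of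
the facets can be continued, using the remaining facets, to a shelling order of all
facets of `𝓕`. -/
def ExtendablyShellable (n : ℕ) (𝓕 : Finset (Finset (Fin n))) : Prop :=
  ∀ (s : ℕ) (F : Fin s → Finset (Fin n)), Function.Injective F → (∀ i, F i ∈ 𝓕) →
    IsShellingOrder n s F →
    ∃ (t : ℕ) (hst : s ≤ t) (G : Fin t → Finset (Fin n)), Function.Injective G ∧
      (∀ i, G i ∈ 𝓕) ∧ (∀ A ∈ 𝓕, ∃ i, G i = A) ∧ IsShellingOrder n t G ∧
      ∀ i : Fin s, G (Fin.castLE hst i) = F i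

section Finset

variable {α : Type*} [Fintype α] [DecidableEq α]

theorem exists_inter_eq_erase_of_card_eq {m : ℕ} {A B : Finset α} (hA : #A = m) (hB : #B = m)
    (hm : Fintype.card α ≤ m + 1) (hAB : A ≠ B) :
    ∃ v ∈ B, A ∩ B = B.erase v := by
  obtain ⟨v, hv⟩ : (B \ A).Nonempty :=
    sdiff_nonempty.2 fun h => hAB (eq_of_subset_of_card_le h (by omega)).symm
  have hle : #(B \ A) ≤ 1 := by
    have := card_sdiff_add_card B A
    have := card_le_univ (B ∪ A)
    omega
  refine ⟨v, (mem_sdiff.1 hv).1, ?_⟩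
  ext z
  simp only [mem_inter, mem_erase]
  constructor
  · rintro ⟨hzA, hzB⟩
    exact ⟨by rintro rfl; exact (mem_sdiff.1 hv).2 hzA, hzB⟩
  · rintro ⟨hzv, hzB⟩
    exact ⟨by_contra fun hzA => hzv (card_le_one.1 hle z (mem_sdiff.2 ⟨hzB, hzA⟩) v hv), hzB⟩

lemma compl_pair_inj {a b c d : α} :
    ({a, b}ᶜ : Finset α) = {c, d}ᶜ ↔ s(a, b) = s(c, d) := by
  rw [compl_inj_iff, ← coe_inj, coe_pair, coe_pair, Set.pair_eq_pair_iff, Sym2.eq_iff]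

lemma inter_compl_eq_erase_iff {B Q : Finset α} {v : α}
    (hB : #Bᶜ = 2) (hv : v ∉ Q) : B ∩ Qᶜ = Qᶜ.erase v ↔ ∃ c ∈ Q, B = {c, v}ᶜ := by
  obtain ⟨P, rfl⟩ : ∃ P, B = Pᶜ := ⟨Bᶜ, (compl_compl B).symm⟩
  rw [compl_compl] at hB
  simp_rw [← compl_union, ← compl_insert, compl_inj_iff]
  constructor
  · intro h
    have hvP : v ∈ P := by
      have := mem_insert_self v Q
      rw [← h, mem_union] at this
      exact this.resolve_right hv
    obtain ⟨c, hc⟩ := card_eq_one.1 (by rw [card_erase_of_mem hvP, hB] : #(P.erase v) = 1)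
    have hcPv : c ∈ P.erase v := hc ▸ mem_singleton_self c
    refine ⟨c, ?_, by rw [← insert_erase hvP, hc, pair_comm]⟩
    have := mem_union_left Q (mem_of_mem_erase hcPv)
    rw [h, mem_insert] at this
    exact this.resolve_left (ne_of_mem_erase hcPv)
  · rintro ⟨c, hc, rfl⟩
    ext z
    simp only [mem_union, mem_insert, mem_singleton]
    constructor
    · rintro ((rfl | rfl) | hz) <;> simp_all
    · tauto

end Finset

namespace SimpleGraph

variable {V : Type*} (G : SimpleGraph V)

def IsSimplicialIn (W : Finset V) (v : V) : Prop :=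
  G.IsClique (G.neighborSet v ∩ W)

def IsSimplicialEdgeIn (W : Finset V) (x y : V) : Prop :=
  x ∈ W ∧ y ∈ W ∧ G.Adj x y ∧ G.IsClique (G.neighborSet x ∩ G.neighborSet y ∩ W)

def HasNonadjSimplicialPair (W : Finset V) : Prop :=
  ∃ u ∈ W, ∃ v ∈ W, u ≠ v ∧ ¬G.Adj u v ∧ G.IsSimplicialIn W u ∧ G.IsSimplicialIn W v

/-- By Dirac's theorem, this property characterises the chordal graphs `G[W]`. -/
def IsDiracOn (W : Finset V) : Prop :=
  ∀ W' ⊆ W, G.IsClique (W' : Set V) ∨ G.HasNonadjSimplicialPair W'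

variable {G} {W : Finset V} {s u v w x y : V}

lemma IsClique.notMem_or_notMem {K : Set V} (hK : G.IsClique K) (huv : u ≠ v)
    (h : ¬G.Adj u v) : u ∉ K ∨ v ∉ K := by
  by_contra! hmem
  exact h (hK hmem.1 hmem.2 huv)

lemma IsDiracOn.mono {W' : Finset V} (hG : G.IsDiracOn W) (h : W' ⊆ W) : G.IsDiracOn W' :=
  fun W'' hW'' => hG W'' (hW''.trans h)

lemma isDiracOn_of_isClique (h : G.IsClique (W : Set V)) : G.IsDiracOn W :=
  fun _ hW' => Or.inl (h.subset (by simpa using hW'))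

lemma IsSimplicialEdgeIn.mono {W' : Finset V} (h : G.IsSimplicialEdgeIn W x y) (hW' : W' ⊆ W)
    (hx : x ∈ W') (hy : y ∈ W') : G.IsSimplicialEdgeIn W' x y :=
  ⟨hx, hy, h.2.2.1, h.2.2.2.subset (Set.inter_subset_inter_right _ (by simpa using hW'))⟩

local notation "G'" => G.deleteEdges {s(x, y)}

lemma deleteEdges_pair_adj :
    (G').Adj u v ↔ G.Adj u v ∧ ¬((u = x ∧ v = y) ∨ (u = y ∧ v = x)) := by
  simp

lemma IsClique.deleteEdges_pair {K : Set V} (hK : G.IsClique K) (h : ¬(x ∈ K ∧ y ∈ K)) :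
    (G').IsClique K := by
  intro a ha b hb hab
  refine deleteEdges_pair_adj.2 ⟨hK ha hb hab, ?_⟩
  rintro (⟨rfl, rfl⟩ | ⟨rfl, rfl⟩) <;> tauto

lemma IsSimplicialIn.deleteEdges_pair (h : G.IsSimplicialIn W w)
    (hxy : ¬(x ∈ G.neighborSet w ∩ W ∧ y ∈ G.neighborSet w ∩ W)) :
    (G').IsSimplicialIn W w :=
  (IsClique.deleteEdges_pair h hxy).subset
    (Set.inter_subset_inter_left _ (neighborSet_mono (deleteEdges_le _) w))

lemma HasNonadjSimplicialPair.deleteEdges_pair (h : G.HasNonadjSimplicialPair W)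
    (hxy : ¬(x ∈ W ∧ y ∈ W)) : (G').HasNonadjSimplicialPair W := by
  obtain ⟨u, hu, v, hv, huv, hadj, hus, hvs⟩ := h
  exact ⟨u, hu, v, hv, huv, fun h => hadj (deleteEdges_pair_adj.1 h).1,
    hus.deleteEdges_pair fun h => hxy ⟨h.1.2, h.2.2⟩,
    hvs.deleteEdges_pair fun h => hxy ⟨h.1.2, h.2.2⟩⟩

theorem IsDiracOn.exists_isSimplicialEdgeIn (hG : G.IsDiracOn W) (hu : u ∈ W) (hv : v ∈ W)
    (huv : G.Adj u v) : ∃ x y, G.IsSimplicialEdgeIn W x y := by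
  classical
  set W₀ := W.filter fun a => ∃ b ∈ W, G.Adj a b
  have hW₀ : ∀ a ∈ W, G.neighborSet a ∩ W ⊆ W₀ :=
    fun a ha b ⟨hab, hb⟩ => mem_filter.2 ⟨hb, a, ha, hab.symm⟩
  rcases hG W₀ (filter_subset _ _) with hcl | ⟨a, ha, -, -, -, -, has, -⟩
  · refine ⟨u, v, hu, hv, huv, hcl.subset ?_⟩
    rintro z ⟨⟨hz, -⟩, hzW⟩
    exact hW₀ u hu ⟨hz, hzW⟩
  · obtain ⟨haW, b, hb, hab⟩ := mem_filter.1 ha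
    refine ⟨a, b, haW, hb, hab, has.subset ?_⟩
    rintro z ⟨⟨hz, -⟩, hzW⟩
    exact ⟨hz, hW₀ a haW ⟨hz, hzW⟩⟩

variable [DecidableEq V]

lemma IsSimplicialIn.of_erase (h : G.IsSimplicialIn (W.erase s) w) (hws : ¬G.Adj w s) :
    G.IsSimplicialIn W w := by
  refine IsClique.subset ?_ h
  rintro z ⟨hz, hzW⟩
  exact ⟨hz, mem_erase.2 ⟨by rintro rfl; exact hws hz, hzW⟩⟩

lemma HasNonadjSimplicialPair.of_erase (h : G.HasNonadjSimplicialPair (W.erase s))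
    (hs : s ∈ W) (hss : G.IsSimplicialIn W s) : G.HasNonadjSimplicialPair W := by
  obtain ⟨u, hu, v, hv, huv, hadj, hus, hvs⟩ := h
  have hpartner : ∀ w ∈ W.erase s, G.IsSimplicialIn (W.erase s) w →
      w ∉ G.neighborSet s ∩ W → G.HasNonadjSimplicialPair W := by
    intro w hw hws hwN
    have hnadj : ¬G.Adj w s := fun h => hwN ⟨h.symm, mem_of_mem_erase hw⟩
    exact ⟨w, mem_of_mem_erase hw, s, hs, ne_of_mem_erase hw, hnadj, hws.of_erase hnadj, hss⟩
  rcases hss.notMem_or_notMem huv hadj with hu' | hv'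
  · exact hpartner u hu hus hu'
  · exact hpartner v hv hvs hv'

lemma IsDiracOn.hasNonadjSimplicialPair_deleteEdges_of_isSimplicialIn (hG : G.IsDiracOn W)
    (hx : x ∈ W) (hy : y ∈ W) (hxy : G.Adj x y) (hxs : G.IsSimplicialIn W x) :
    (G').HasNonadjSimplicialPair W := by
  have hx' : (G').IsSimplicialIn W x := hxs.deleteEdges_pair fun h => G.irrefl h.1.1
  rcases hG (W.erase x) (erase_subset _ _) with hcl | hpair
  · have hcl' : (G').IsClique (W.erase x : Set V) := hcl.deleteEdges_pair (by simp)
    have hyx : ¬(G').Adj y x := by simp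
    exact ⟨y, hy, x, hx, hxy.ne.symm, hyx,
      IsSimplicialIn.of_erase (hcl'.subset Set.inter_subset_right) hyx, hx'⟩
  · exact (hpair.deleteEdges_pair (by simp)).of_erase hx hx'

theorem IsDiracOn.hasNonadjSimplicialPair_deleteEdges (hG : G.IsDiracOn W)
    (h : G.IsSimplicialEdgeIn W x y) : (G').HasNonadjSimplicialPair W := by
  induction W using Finset.strongInduction with
  | H W ih =>
  obtain ⟨hx, hy, hxy, hC⟩ := h
  rcases hG W subset_rfl with hW | ⟨u, hu, v, hv, huv, hadj, hus, hvs⟩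
  · exact hG.hasNonadjSimplicialPair_deleteEdges_of_isSimplicialIn hx hy hxy
      (hW.subset Set.inter_subset_right)
  -- A simplicial vertex `t` outside the clique `N(x) ∩ N(y)` stays simplicial in `G'`, and a
  -- nonadjacent simplicial pair of `G'[W - t]` can be completed by `t`.
  obtain ⟨t, ht, hts, htC⟩ : ∃ t ∈ W, G.IsSimplicialIn W t ∧
      t ∉ G.neighborSet x ∩ G.neighborSet y ∩ W := by
    rcases hC.notMem_or_notMem huv hadj with h | h
    exacts [⟨u, hu, hus, h⟩, ⟨v, hv, hvs, h⟩]
  by_cases htx : t = x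
  · subst htx
    exact hG.hasNonadjSimplicialPair_deleteEdges_of_isSimplicialIn hx hy hxy hts
  by_cases hty : t = y
  · subst hty
    rw [Sym2.eq_swap]
    exact hG.hasNonadjSimplicialPair_deleteEdges_of_isSimplicialIn hy hx hxy.symm hts
  have ht' : (G').IsSimplicialIn W t :=
    hts.deleteEdges_pair fun h => htC ⟨⟨h.1.1.symm, h.2.1.symm⟩, ht⟩
  have hedge : G.IsSimplicialEdgeIn (W.erase t) x y :=
    IsSimplicialEdgeIn.mono ⟨hx, hy, hxy, hC⟩ (erase_subset _ _)
      (mem_erase.2 ⟨Ne.symm htx, hx⟩) (mem_erase.2 ⟨Ne.symm hty, hy⟩)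
  exact (ih _ (erase_ssubset ht) (hG.mono (erase_subset _ _)) hedge).of_erase ht ht'

theorem IsDiracOn.deleteEdges_pair (hG : G.IsDiracOn W) (h : G.IsSimplicialEdgeIn W x y) :
    (G').IsDiracOn W := by
  intro W' hW'
  by_cases hboth : x ∈ W' ∧ y ∈ W'
  · exact Or.inr ((hG.mono hW').hasNonadjSimplicialPair_deleteEdges
      (h.mono hW' hboth.1 hboth.2))
  · exact (hG W' hW').imp (fun hcl => hcl.deleteEdges_pair (by simpa using hboth))
      (fun hpair => hpair.deleteEdges_pair hboth)

end SimpleGraph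

section Shelling

variable {n s : ℕ}

/-- `A` may follow `F 0, …, F (j - 1)` in a shelling order. -/
def IsShellingStep (F : Fin s → Finset (Fin n)) (j : ℕ) (A : Finset (Fin n)) : Prop :=
  ∀ i : Fin s, (i : ℕ) < j → ∃ ℓ : Fin s, (ℓ : ℕ) < j ∧ ∃ v ∈ A,
    F i ∩ A ⊆ F ℓ ∩ A ∧ F ℓ ∩ A = A.erase v

variable {F : Fin s → Finset (Fin n)} {j : ℕ} {A : Finset (Fin n)}

lemma isShellingOrder_iff_forall_isShellingStep :
    IsShellingOrder n s F ↔ ∀ j : Fin s, IsShellingStep F j (F j) :=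
  Iff.rfl

lemma isShellingStep_iff : IsShellingStep F j A ↔ ∀ i : Fin s, (i : ℕ) < j →
    ∃ ℓ : Fin s, (ℓ : ℕ) < j ∧ ∃ v ∈ A, v ∉ F i ∧ F ℓ ∩ A = A.erase v := by
  refine forall₂_congr fun i _ => exists_congr fun ℓ => and_congr_right fun _ =>
    exists_congr fun v => and_congr_right fun hv => ?_
  constructor
  · rintro ⟨hsub, heq⟩
    refine ⟨fun hvi => ?_, heq⟩
    have := hsub (mem_inter.2 ⟨hvi, hv⟩)
    simp [heq] at this
  · rintro ⟨hvi, heq⟩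
    refine ⟨heq ▸ subset_erase.2 ⟨inter_subset_right, fun h => hvi (mem_inter.1 h).1⟩, heq⟩

lemma isShellingStep_snoc {B : Finset (Fin n)} (hj : j ≤ s) :
    IsShellingStep (Fin.snoc F A : Fin (s + 1) → Finset (Fin n)) j B ↔ IsShellingStep F j B := by
  simp [IsShellingStep, Fin.forall_fin_succ', Fin.exists_fin_succ', not_lt.2 hj]

lemma IsShellingOrder.snoc (hF : IsShellingOrder n s F) (hA : IsShellingStep F s A) :
    IsShellingOrder n (s + 1) (Fin.snoc F A) := by
  rw [isShellingOrder_iff_forall_isShellingStep] at hF ⊢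
  refine Fin.forall_fin_succ'.2 ⟨fun j => ?_, ?_⟩
  · simpa [isShellingStep_snoc j.is_lt.le] using hF j
  · simpa [isShellingStep_snoc le_rfl] using hA

variable {𝓕 : Finset (Finset (Fin n))}

lemma exists_mem_notMem_range (F : Fin s → Finset (Fin n)) (hlt : s < #𝓕) :
    ∃ A ∈ 𝓕, A ∉ Set.range F := by
  obtain ⟨A, hA, hAF⟩ := exists_mem_notMem_of_card_lt_card (s := univ.image F)
    (card_image_le.trans_lt (by simpa using hlt))
  exact ⟨A, hA, by simpa using hAF⟩

lemma forall_snoc_mem (hmem : ∀ i, F i ∈ 𝓕) (hA : A ∈ 𝓕) :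
    ∀ i, (Fin.snoc F A : Fin (s + 1) → Finset (Fin n)) i ∈ 𝓕 :=
  Fin.forall_fin_succ'.2 ⟨by simpa using hmem, by simpa using hA⟩

theorem extendablyShellable_of_exists_snoc
    (step : ∀ (s : ℕ) (F : Fin s → Finset (Fin n)), Function.Injective F → (∀ i, F i ∈ 𝓕) →
      IsShellingOrder n s F → s < #𝓕 →
      ∃ A ∈ 𝓕, A ∉ Set.range F ∧ IsShellingOrder n (s + 1) (Fin.snoc F A)) :
    ExtendablyShellable n 𝓕 := by
  intro s F hinj hmem hshell
  induction hd : #𝓕 - s generalizing s with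
  | zero =>
    have hrange : univ.image F = 𝓕 := eq_of_subset_of_card_le
      (image_subset_iff.2 fun i _ => hmem i) (by rw [card_image_of_injective _ hinj]; simp; omega)
    refine ⟨s, le_rfl, F, hinj, hmem, fun A hA => ?_, hshell, fun i => rfl⟩
    rw [← hrange] at hA
    simpa using hA
  | succ d ih =>
    obtain ⟨A, hA, hAF, hshell'⟩ := step s F hinj hmem hshell (by omega)
    obtain ⟨t, hst, G, hG, hGmem, hGall, hGshell, hGF⟩ :=
      ih (s + 1) (Fin.snoc F A) (Fin.snoc_injective_iff.2 ⟨hinj, hAF⟩) (forall_snoc_mem hmem hA)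
        hshell' (by omega)
    exact ⟨t, by omega, G, hG, hGmem, hGall, hGshell, fun i => by simpa using hGF i.castSucc⟩

lemma isShellingOrder_of_pairwise
    (h𝓕 : ∀ A ∈ 𝓕, ∀ B ∈ 𝓕, A ≠ B → ∃ v ∈ B, A ∩ B = B.erase v)
    (hinj : Function.Injective F) (hmem : ∀ i, F i ∈ 𝓕) : IsShellingOrder n s F := by
  intro j i hij
  obtain ⟨v, hv, heq⟩ := h𝓕 _ (hmem i) _ (hmem j) (hinj.ne hij.ne)
  exact ⟨i, hij, v, hv, subset_rfl, heq⟩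

theorem extendablyShellable_of_pairwise
    (h𝓕 : ∀ A ∈ 𝓕, ∀ B ∈ 𝓕, A ≠ B → ∃ v ∈ B, A ∩ B = B.erase v) :
    ExtendablyShellable n 𝓕 :=
  extendablyShellable_of_exists_snoc fun _ F hinj hmem _ hlt => by
    obtain ⟨A, hA, hAF⟩ := exists_mem_notMem_range F hlt
    exact ⟨A, hA, hAF, isShellingOrder_of_pairwise h𝓕 (Fin.snoc_injective_iff.2 ⟨hinj, hAF⟩)
      (forall_snoc_mem hmem hA)⟩

end Shelling

section PairComplements

variable {n s : ℕ} {F : Fin s → Finset (Fin n)} {j : ℕ} {x y : Fin n}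

/-- A facet of size `n - 2` is the complement of an edge of the complete graph on `Fin n`;
this is the graph of the edges whose facets are not among `F 0, …, F (j - 1)`. -/
def unusedGraph (F : Fin s → Finset (Fin n)) (j : ℕ) : SimpleGraph (Fin n) where
  Adj a b := a ≠ b ∧ ∀ i : Fin s, (i : ℕ) < j → F i ≠ {a, b}ᶜ
  symm := ⟨fun _ _ h => ⟨h.1.symm, by simpa only [pair_comm] using h.2⟩⟩
  loopless := ⟨fun _ h => h.1 rfl⟩

@[simp]
lemma unusedGraph_adj {a b : Fin n} :
    (unusedGraph F j).Adj a b ↔ a ≠ b ∧ ∀ i : Fin s, (i : ℕ) < j → F i ≠ {a, b}ᶜ :=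
  Iff.rfl

lemma not_unusedGraph_adj {a b : Fin n} (hab : a ≠ b) :
    ¬(unusedGraph F j).Adj a b ↔ ∃ i : Fin s, (i : ℕ) < j ∧ F i = {a, b}ᶜ := by
  simp [hab]

lemma unusedGraph_succ (hj : j < s) (h : F ⟨j, hj⟩ = {x, y}ᶜ) :
    unusedGraph F (j + 1) = (unusedGraph F j).deleteEdges {s(x, y)} := by
  have hlt : ∀ i : Fin s, (i : ℕ) < j + 1 ↔ (i : ℕ) < j ∨ i = ⟨j, hj⟩ := by
    intro i
    simp only [Fin.ext_iff]
    omega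
  ext a b
  simp only [unusedGraph_adj, SimpleGraph.deleteEdges_adj, Set.mem_singleton_iff, hlt, or_imp,
    forall_and, forall_eq, h, ne_eq, compl_pair_inj, eq_comm (a := s(x, y))]
  tauto

theorem IsShellingStep.isClique_neighborSet_inter (hF : ∀ i, #(F i)ᶜ = 2)
    (h : IsShellingStep F j {x, y}ᶜ) : (unusedGraph F j).IsClique
      ((unusedGraph F j).neighborSet x ∩ (unusedGraph F j).neighborSet y) := by
  intro u hu w hw huw
  by_contra hnadj
  obtain ⟨i, hi, hFi⟩ := (not_unusedGraph_adj huw).1 hnadj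
  obtain ⟨ℓ, hℓ, v, hvQ, hvi, heq⟩ := isShellingStep_iff.1 h i hi
  rw [mem_compl] at hvQ
  obtain ⟨c, hc, hFℓ⟩ := (inter_compl_eq_erase_iff (hF ℓ) hvQ).1 heq
  have hvC : v ∈ (unusedGraph F j).neighborSet x ∩ (unusedGraph F j).neighborSet y := by
    simp only [hFi, mem_compl, mem_insert, mem_singleton, not_not] at hvi
    rcases hvi with rfl | rfl
    exacts [hu, hw]
  have hcv : (unusedGraph F j).Adj c v := by
    simp only [mem_insert, mem_singleton] at hc
    rcases hc with rfl | rfl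
    exacts [hvC.1, hvC.2]
  exact (not_unusedGraph_adj hcv.ne).2 ⟨ℓ, hℓ, hFℓ⟩ hcv

theorem isShellingStep_compl_pair_of_isClique (hF : ∀ i, #(F i)ᶜ = 2)
    (hxy : (unusedGraph F j).Adj x y) (hC : (unusedGraph F j).IsClique
      ((unusedGraph F j).neighborSet x ∩ (unusedGraph F j).neighborSet y)) :
    IsShellingStep F j {x, y}ᶜ := by
  set G := unusedGraph F j
  refine isShellingStep_iff.2 fun i hi => ?_
  obtain ⟨u, w, huw, hFi⟩ := card_eq_two.1 (hF i)
  have hnadj : ¬G.Adj u w := (not_unusedGraph_adj huw).2 ⟨i, hi, by rw [← hFi, compl_compl]⟩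
  have hK : G.IsClique (insert x (insert y (G.neighborSet x ∩ G.neighborSet y))) := by
    refine (hC.insert fun b hb _ => hb.2).insert ?_
    rintro b (rfl | hb) -
    exacts [hxy, hb.1]
  -- The missing pair `{u, w}` of `F i` is not an edge of `G`, so it has a vertex `v` outside
  -- the clique `hK`; a used edge `cv` with `c ∈ {x, y}` then gives the facet `F ℓ = {c, v}ᶜ`.
  obtain ⟨v, hvi, hvK⟩ : ∃ v, v ∉ F i ∧
      v ∉ insert x (insert y (G.neighborSet x ∩ G.neighborSet y)) := by
    rcases hK.notMem_or_notMem huw hnadj with h | h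
    exacts [⟨u, by simp [← mem_compl, hFi], h⟩, ⟨w, by simp [← mem_compl, hFi], h⟩]
  simp only [Set.mem_insert_iff, Set.mem_inter_iff, SimpleGraph.mem_neighborSet, not_or] at hvK
  obtain ⟨hvx, hvy, hvC⟩ := hvK
  have hvQ : v ∉ ({x, y} : Finset (Fin n)) := by simp [hvx, hvy]
  obtain ⟨c, hc, hcv⟩ : ∃ c ∈ ({x, y} : Finset (Fin n)), ¬G.Adj c v := by
    by_cases hxv : G.Adj x v
    · exact ⟨y, by simp, fun hyv => hvC ⟨hxv, hyv⟩⟩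
    · exact ⟨x, by simp, hxv⟩
  obtain ⟨ℓ, hℓ, hFℓ⟩ := (not_unusedGraph_adj (ne_of_mem_of_not_mem hc hvQ)).1 hcv
  exact ⟨ℓ, hℓ, v, mem_compl.2 hvQ, hvi, (inter_compl_eq_erase_iff (hF ℓ) hvQ).2 ⟨c, hc, hFℓ⟩⟩

theorem isDiracOn_unusedGraph (hF : ∀ i, #(F i)ᶜ = 2) (hinj : Function.Injective F)
    (hshell : IsShellingOrder n s F) (hj : j ≤ s) : (unusedGraph F j).IsDiracOn univ := by
  induction j with
  | zero =>
    exact SimpleGraph.isDiracOn_of_isClique fun a _ b _ hab => unusedGraph_adj.2 ⟨hab, by simp⟩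
  | succ j ih =>
    have hjs : j < s := hj
    obtain ⟨x, y, hxy, hP⟩ := card_eq_two.1 (hF ⟨j, hjs⟩)
    have hFj : F ⟨j, hjs⟩ = {x, y}ᶜ := by rw [← hP, compl_compl]
    have hadj : (unusedGraph F j).Adj x y := unusedGraph_adj.2
      ⟨hxy, fun i hi h => hi.ne (congrArg Fin.val (hinj (h.trans hFj.symm)))⟩
    have hstep : IsShellingStep F j {x, y}ᶜ := hFj ▸ hshell ⟨j, hjs⟩
    rw [unusedGraph_succ hjs hFj]
    refine (ih hjs.le).deleteEdges_pair ⟨mem_univ x, mem_univ y, hadj, ?_⟩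
    simpa using hstep.isClique_neighborSet_inter hF

theorem extendablyShellable_of_mem_iff_card_compl_eq_two {𝓕 : Finset (Finset (Fin n))}
    (h𝓕 : ∀ A, A ∈ 𝓕 ↔ #Aᶜ = 2) : ExtendablyShellable n 𝓕 := by
  refine extendablyShellable_of_exists_snoc fun s F hinj hmem hshell hlt => ?_
  have hF : ∀ i, #(F i)ᶜ = 2 := fun i => (h𝓕 _).1 (hmem i)
  obtain ⟨A, hA, hAF⟩ := exists_mem_notMem_range F hlt
  obtain ⟨a, b, hab, hA'⟩ := card_eq_two.1 ((h𝓕 A).1 hA)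
  have hadj : (unusedGraph F s).Adj a b := unusedGraph_adj.2
    ⟨hab, fun i _ h => hAF ⟨i, h.trans (by rw [← hA', compl_compl])⟩⟩
  obtain ⟨x, y, -, -, hxy, hC⟩ := (isDiracOn_unusedGraph hF hinj hshell le_rfl)
    |>.exists_isSimplicialEdgeIn (mem_univ a) (mem_univ b) hadj
  refine ⟨{x, y}ᶜ, (h𝓕 _).2 (by rw [compl_compl, card_pair hxy.ne]), ?_,
    hshell.snoc (isShellingStep_compl_pair_of_isClique hF hxy (by simpa using hC))⟩
  rintro ⟨i, hi⟩
  exact (unusedGraph_adj.1 hxy).2 i i.is_lt hi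

end PairComplements

theorem skeleta_extendably_shellable_general (n k : ℕ) (h1 : n - 3 ≤ k) :
    ExtendablyShellable n
      (Finset.powersetCard (k + 1) (Finset.univ : Finset (Fin n))) := by
  rcases (by omega : n ≤ k + 2 ∨ k + 1 = n - 2 ∧ 2 ≤ n) with hn | ⟨hk, hn⟩
  · refine extendablyShellable_of_pairwise fun A hA B hB hAB => ?_
    rw [mem_powersetCard] at hA hB
    exact exists_inter_eq_erase_of_card_eq hA.2 hB.2 (by simpa using hn) hAB
  · refine extendablyShellable_of_mem_iff_card_compl_eq_two fun A => ?_
    rw [mem_powersetCard, card_compl, Fintype.card_fin, hk]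
    simp only [subset_univ, true_and]
    omega

/-- for every `n` and every `k` with `n - 3 ≤ k ≤ n - 1`, the `k`-skeleton
of the simplex on `[n]`, whose facets are all the `(k+1)`-element subsets of `[n]`, is
extendably shellable. -/
theorem skeleta_extendably_shellable (n k : ℕ) (h1 : n - 3 ≤ k) (h2 : k ≤ n - 1) :
    ExtendablyShellable n
      (Finset.powersetCard (k + 1) (Finset.univ : Finset (Fin n))) :=
  skeleta_extendably_shellable_general n k h1
end

section
/- Every chordal graph with at least one edge contains an exposed edge, i.e., an edge contained in a unique maximal clique. -/
/-!
An edge at a simplicial vertex `v` is exposed: its unique maximal clique is the closed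
neighbourhood of `v`. Simplicial vertices come from Dirac's lemma (a chordal graph is complete or
has two nonadjacent simplicial vertices), proved by induction on the vertex set: if `C` is a
component of `G - N[x]`, the neighbours of `C` form a clique, so one of the two simplicial
vertices of `G[C ∪ N(C)]` lies in `C` and is simplicial in `G`. Applied to the non-isolated
vertices, this yields a simplicial vertex with a neighbour.
-/

open SimpleGraph Walk Set

variable {V : Type} {G : SimpleGraph V}

namespace SimpleGraph.Walk

variable {u v : V}

lemma exists_shorter_cons_of_adj {c b : V} (h : G.Adj u c) (p : G.Walk c v) (hb : b ∈ p.support)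
    (hbc : b ≠ c) (hub : G.Adj u b) :
    ∃ q : G.Walk u v, q.support ⊆ (cons h p).support ∧ q.length < (cons h p).length := by
  classical
  refine ⟨cons hub (p.dropUntil b hb), ?_, ?_⟩
  · exact List.cons_subset_cons _ (p.support_dropUntil_subset_support hb)
  · simpa using p.length_dropUntil_lt_length hb hbc

lemma IsChord.exists_shorter {p : G.Walk u v} {a b : V} (h : p.IsChord s(a, b)) :
    ∃ q : G.Walk u v, q.support ⊆ p.support ∧ q.length < p.length := by
  obtain ⟨hab, hnot, ha, hb⟩ := isChord_sym2Mk.mp h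
  clear h
  induction p with
  | nil => simp_all
  | @cons u c v h p ih =>
    simp only [support_cons, List.mem_cons, edges_cons, not_or] at ha hb hnot
    obtain ⟨hnot_uc, hnot⟩ := hnot
    rcases ha with rfl | ha
    · refine exists_shorter_cons_of_adj h p (hb.resolve_left hab.ne') ?_ hab
      rintro rfl
      exact hnot_uc rfl
    rcases hb with rfl | hb
    · refine exists_shorter_cons_of_adj h p ha ?_ hab.symm
      rintro rfl
      exact hnot_uc Sym2.eq_swap
    obtain ⟨q, hq, hlt⟩ := ih hnot ha hb
    exact ⟨cons h q, List.cons_subset_cons _ hq, by simpa using hlt⟩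

lemma exists_isPath_isChordless_of_support_subset (P : Set V) (p : G.Walk u v)
    (hp : ∀ z ∈ p.support, z ∈ P) :
    ∃ q : G.Walk u v, (∀ z ∈ q.support, z ∈ P) ∧ q.IsPath ∧ q.IsChordless := by
  classical
  obtain ⟨q, hqP, hmin⟩ := (measure (Walk.length (G := G) (u := u) (v := v))).wf.has_min
    {q | ∀ z ∈ q.support, z ∈ P} ⟨p, hp⟩
  have hqP : ∀ z ∈ q.support, z ∈ P := hqP
  refine ⟨q, hqP, ?_, ?_⟩
  · have hle : q.length ≤ q.bypass.length :=
      not_lt.mp (hmin _ fun z hz => hqP z (q.support_bypass_subset_support hz))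
    exact q.bypass_eq_self_of_length_le_length_bypass hle ▸ q.bypass_isPath
  · refine isChordless_iff_forall_mem_edges.mpr fun a b ha hb hab => ?_
    by_contra hnot
    obtain ⟨r, hr, hlt⟩ := IsChord.exists_shorter (isChord_sym2Mk.mpr ⟨hab, hnot, ha, hb⟩)
    exact hmin r (fun z hz => hqP z (hr hz)) hlt

end SimpleGraph.Walk

/-- A shortest walk from `s` to `t` avoiding the closed neighbourhood of `x` closes up through `x`
to a chordless cycle of length at least four unless `s` and `t` are adjacent. -/
lemma IsChordalGraph.adj_of_walk_avoiding (hG : IsChordalGraph G) {x s t : V} (hs : G.Adj x s)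
    (ht : G.Adj x t) (hst : s ≠ t) (w : G.Walk s t)
    (hw : ∀ z ∈ w.support, z = s ∨ z = t ∨ (x ≠ z ∧ ¬G.Adj x z)) : G.Adj s t := by
  by_contra hnst
  obtain ⟨p, hpP, hp, hpc⟩ := w.exists_isPath_isChordless_of_support_subset
    {z | z = s ∨ z = t ∨ (x ≠ z ∧ ¬G.Adj x z)} hw
  have hx : ∀ z ∈ p.support, x = z ∨ G.Adj x z → z = s ∨ z = t := fun z hz hxz => by
    have : z = s ∨ z = t ∨ (x ≠ z ∧ ¬G.Adj x z) := hpP z hz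
    tauto
  have hxp : x ∉ p.support := fun h => by
    rcases hx x h (Or.inl rfl) with rfl | rfl
    · exact hs.ne rfl
    · exact ht.ne rfl
  have hlen : 1 < p.length := lt_of_lt_of_le
    (p.reachable.one_lt_dist_of_ne_of_not_adj hst hnst) (dist_le p)
  let c : G.Walk t t := cons ht.symm (cons hs p)
  have hc : c.IsCycle := by
    refine (cons_isCycle_iff _ _).mpr ⟨hp.cons hxp, ?_⟩
    simp only [edges_cons, List.mem_cons, Sym2.eq, Sym2.rel_iff', not_or]
    exact ⟨by grind [Adj.ne], fun h => hxp (p.snd_mem_support_of_mem_edges h)⟩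
  obtain ⟨a, b, ha, hb, hab, hnot⟩ := hG t c hc (by simp [c]; omega)
  have hsupp : ∀ z ∈ c.support, z = x ∨ z ∈ p.support := by
    simp only [c, support_cons, List.mem_cons]
    rintro z (rfl | rfl | hz)
    exacts [Or.inr p.end_mem_support, Or.inl rfl, Or.inr hz]
  rcases hsupp a ha with rfl | ha' <;> rcases hsupp b hb with rfl | hb'
  · exact hab.ne rfl
  · rcases hx b hb' (Or.inr hab) with rfl | rfl <;> simp [c, Sym2.eq_swap] at hnot
  · rcases hx a ha' (Or.inr hab.symm) with rfl | rfl <;> simp [c, Sym2.eq_swap] at hnot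
  · exact hnot (by simp [c, hpc.mem_edges ha' hb' hab])

/-- `v` is simplicial in the induced subgraph `G[U]`. -/
def IsSimplicialOn (G : SimpleGraph V) (U : Set V) (v : V) : Prop :=
  G.IsClique (G.neighborSet v ∩ U)

lemma IsSimplicialOn.of_neighborSet_inter_subset {U W : Set V} {v : V}
    (hv : IsSimplicialOn G W v) (hUW : G.neighborSet v ∩ U ⊆ W) : IsSimplicialOn G U v :=
  hv.subset (subset_inter inter_subset_left hUW)

/-- Let `C` be the component of `c` in `U` minus the closed neighbourhood of `x`, and `W` the set
of vertices of `U` in `C` or adjacent to it. -/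
lemma IsChordalGraph.exists_component (hG : IsChordalGraph G) {U : Set V} {x c : V}
    (hx : x ∈ U) (hc : c ∈ U) (hxc : x ≠ c) (hnxc : ¬G.Adj x c) :
    ∃ C W : Set V, c ∈ C ∧ C ⊆ W ∧ W ⊂ U ∧ G.IsClique (W \ C) ∧
      ∀ z ∈ C, x ≠ z ∧ ¬G.Adj x z ∧ G.neighborSet z ∩ U ⊆ W := by
  set D : Set V := {z | z ∈ U ∧ x ≠ z ∧ ¬G.Adj x z}
  set C : Set V := {z | ∃ w : G.Walk c z, ∀ y ∈ w.support, y ∈ D}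
  set W : Set V := {y | y ∈ U ∧ ∃ z ∈ C, z = y ∨ G.Adj z y}
  have hCD : C ⊆ D := fun z ⟨w, hw⟩ => hw z w.end_mem_support
  have hC_closed : ∀ z ∈ C, ∀ y ∈ D, G.Adj z y → y ∈ C := by
    rintro z ⟨w, hw⟩ y hy hzy
    refine ⟨w.concat hzy, fun v hv => ?_⟩
    rw [support_concat, List.mem_append, List.mem_singleton] at hv
    rcases hv with hv | rfl
    exacts [hw v hv, hy]
  have hWC : ∀ y ∈ W \ C, G.Adj x y ∧ ∃ z ∈ C, G.Adj z y := by
    rintro y ⟨⟨hyU, z, hzC, rfl | hzy⟩, hyC⟩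
    · exact absurd hzC hyC
    obtain ⟨hzU, hxz, hnxz⟩ := hCD hzC
    refine ⟨by_contra fun hnxy => hyC (hC_closed z hzC y ⟨hyU, ?_, hnxy⟩ hzy), z, hzC, hzy⟩
    rintro rfl
    exact hnxz hzy.symm
  refine ⟨C, W, ⟨nil, fun y hy => by
    rw [support_nil, List.mem_singleton] at hy; exact hy ▸ ⟨hc, hxc, hnxc⟩⟩,
    fun z hz => ⟨(hCD hz).1, z, hz, Or.inl rfl⟩, ?_, ?_,
    fun z hz => ⟨(hCD hz).2.1, (hCD hz).2.2,
      fun y ⟨hzy, hyU⟩ => ⟨hyU, z, hz, Or.inr hzy⟩⟩⟩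
  · refine (ssubset_iff_of_subset fun y hy => hy.1).mpr ⟨x, hx, ?_⟩
    rintro ⟨-, z, hzC, hzx⟩
    obtain ⟨-, hxz, hnxz⟩ := hCD hzC
    rcases hzx with rfl | hzx
    exacts [hxz rfl, hnxz hzx.symm]
  · intro s hs t ht hst
    obtain ⟨hxs, zs, hzsC, hzss⟩ := hWC s hs
    obtain ⟨hxt, zt, hztC, hztt⟩ := hWC t ht
    obtain ⟨ws, hws⟩ := hzsC
    obtain ⟨wt, hwt⟩ := hztC
    refine hG.adj_of_walk_avoiding hxs hxt hst
      (cons hzss.symm ((ws.reverse.append wt).concat hztt)) fun v hv => ?_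
    simp only [support_cons, support_concat, support_append, support_reverse, List.mem_cons,
      List.mem_append, List.mem_reverse, List.not_mem_nil, or_false] at hv
    rcases hv with rfl | (hv | hv) | rfl
    · exact Or.inl rfl
    · exact Or.inr (Or.inr (hws v hv).2)
    · exact Or.inr (Or.inr (hwt v (List.mem_of_mem_tail hv)).2)
    · exact Or.inr (Or.inl rfl)

/-- Dirac's lemma, relative to a vertex set `U`. -/
theorem IsChordalGraph.isClique_or_exists_isSimplicialOn_pair [Finite V] (hG : IsChordalGraph G)
    (U : Set V) : G.IsClique U ∨ ∃ u ∈ U, ∃ v ∈ U, u ≠ v ∧ ¬G.Adj u v ∧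
      IsSimplicialOn G U u ∧ IsSimplicialOn G U v := by
  induction U using WellFoundedLT.induction with
  | _ U ih =>
  by_cases hU : G.IsClique U
  · exact Or.inl hU
  have away : ∀ x ∈ U, ∀ c ∈ U, x ≠ c → ¬G.Adj x c →
      ∃ v ∈ U, x ≠ v ∧ ¬G.Adj x v ∧ IsSimplicialOn G U v := by
    intro x hx c hc hxc hnxc
    obtain ⟨C, W, hcC, hCW, hWU, hK, hC⟩ := hG.exists_component hx hc hxc hnxc
    have lift : ∀ v ∈ C, IsSimplicialOn G W v →
        ∃ v ∈ U, x ≠ v ∧ ¬G.Adj x v ∧ IsSimplicialOn G U v := fun v hv hvW =>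
      ⟨v, hWU.1 (hCW hv), (hC v hv).1, (hC v hv).2.1,
        hvW.of_neighborSet_inter_subset (hC v hv).2.2⟩
    rcases ih W hWU with hW | ⟨u, hu, v, hv, huv, hnuv, hsu, hsv⟩
    · exact lift c hcC (hW.subset inter_subset_right)
    by_cases huC : u ∈ C
    · exact lift u huC hsu
    by_cases hvC : v ∈ C
    · exact lift v hvC hsv
    exact absurd (hK ⟨hu, huC⟩ ⟨hv, hvC⟩ huv) hnuv
  obtain ⟨x, hx, c, hc, hxc, hnxc⟩ : ∃ x ∈ U, ∃ c ∈ U, x ≠ c ∧ ¬G.Adj x c := by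
    simpa [IsClique, Set.Pairwise] using hU
  obtain ⟨u, hu, hxu, hnxu, hsu⟩ := away x hx c hc hxc hnxc
  obtain ⟨v, hv, huv, hnuv, hsv⟩ := away u hu x hx hxu.symm fun h => hnxu h.symm
  exact Or.inr ⟨u, hu, v, hv, huv, hnuv, hsu, hsv⟩

theorem IsChordalGraph.exists_isSimplicialOn [Finite V] (hG : IsChordalGraph G) {U : Set V}
    (hU : U.Nonempty) : ∃ v ∈ U, IsSimplicialOn G U v := by
  rcases hG.isClique_or_exists_isSimplicialOn_pair U with hclq | ⟨u, hu, -, -, -, -, hsu, -⟩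
  · exact ⟨hU.some, hU.some_mem, hclq.subset inter_subset_right⟩
  · exact ⟨u, hu, hsu⟩

lemma isExposedEdge_of_isClique_neighborSet {v u : V} (hvu : G.Adj v u)
    (hv : G.IsClique (G.neighborSet v)) : IsExposedEdge G s(v, u) := by
  set K := insert v (G.neighborSet v)
  have hK : G.IsClique K := hv.insert fun w hw _ => hw
  have hsubK : ∀ T, G.IsClique T → v ∈ T → T ⊆ K := fun T hT hvT t ht => by
    by_cases htv : t = v
    · exact htv ▸ mem_insert v _
    · exact mem_insert_of_mem v (hT hvT ht (Ne.symm htv))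
  have hKmax : IsMaxGraphClique G K :=
    ⟨hK, fun T hT hKT => hKT.antisymm (hsubK T hT (hKT (mem_insert v _)))⟩
  refine ⟨hvu, K, ⟨hKmax, ?_⟩, ?_⟩
  · simp [K, Sym2.mem_iff, hvu]
  · rintro S ⟨⟨hS, hSmax⟩, hmem⟩
    exact hSmax K hK (hsubK S hS (hmem v (Sym2.mem_mk_left v u)))

/-- every chordal graph with at least one edge contains an exposed edge. -/
theorem chordal_has_exposed_edge (n : ℕ) (G : SimpleGraph (Fin n))
    (hch : IsChordalGraph G) (hne : G.edgeSet.Nonempty) :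
    ∃ e ∈ G.edgeSet, IsExposedEdge G e := by
  set U : Set (Fin n) := {x | ∃ y, G.Adj x y}
  have hU : U.Nonempty := by
    obtain ⟨e, he⟩ := hne
    induction e using Sym2.ind with
    | _ x y => exact ⟨x, y, he⟩
  obtain ⟨v, ⟨u, hvu⟩, hv⟩ := hch.exists_isSimplicialOn hU
  have hvG : G.IsClique (G.neighborSet v) :=
    hv.subset <| subset_inter subset_rfl fun w (hw : G.Adj v w) =>
      show ∃ y, G.Adj w y from ⟨v, hw.symm⟩
  exact ⟨s(v, u), hvu, isExposedEdge_of_isClique_neighborSet hvu hvG⟩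
end

section
/- Let G be a chordal graph and let ∂G denote the edge-induced subgraph of G determined by the properly exposed edges of G. Then every connected component of ∂G is 2-edge-connected; equivalently, ∂G has no bridges: for every edge e of ∂G, the endpoints of e are joined by a path in ∂G that avoids e. -/
/-- The edge-induced subgraph `∂G` of `G` determined by the properly exposed edges. -/
def exposedBoundary {V : Type} (G : SimpleGraph V) : SimpleGraph V :=
  SimpleGraph.fromEdgeSet {e | e ∈ G.edgeSet ∧ IsProperlyExposedEdge G e}

/-!
Induction on `G`. For an edge `uv` of a maximal clique `K` with `|K| ≥ 3` there is a
simplicial vertex `s ∉ {u, v}` with a neighbour: a third vertex of `K` if the non-isolated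
vertices form a clique, and otherwise one of the two nonadjacent simplicial vertices given by
Dirac's lemma (minimal vertex separators of a chordal graph are cliques). The edges at a
simplicial vertex with two neighbours are properly exposed, so if `s` is adjacent to `u` and
`v`, then `u - s - v` is the detour. Otherwise `s ∉ K`; deleting the edges at `s` keeps the graph
chordal and `K` maximal, and the detour in the smaller graph lifts: each of its edges is either
still properly exposed in `G`, or both its ends are adjacent to `s` and it is replaced by the
two edges through `s`.
-/

open SimpleGraph

variable {V : Type}

namespace SimpleGraph

variable {G : SimpleGraph V}

namespace Walk

lemma mem_edges_of_length_eq_one {a b : V} {p : G.Walk a b} (h : p.length = 1) :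
    s(a, b) ∈ p.edges := by
  cases p with
  | nil => simp at h
  | cons _ p =>
    obtain rfl := eq_of_length_eq_zero (by simpa using h : p.length = 0)
    simp

lemma mem_edges_of_append_of_length_eq_dist {u v a b : V} {q : G.Walk u a} {r : G.Walk a v}
    (hp : (q.append r).length = G.dist u v) (hb : b ∈ r.support) (hab : G.Adj a b) :
    s(a, b) ∈ (q.append r).edges := by
  obtain ⟨r₁, r₂, rfl⟩ := mem_support_iff_exists_append.mp hb
  have hshort := G.dist_le (q.append (cons hab r₂))
  simp only [length_append, length_cons] at hp hshort
  have hr₁ : r₁.length = 1 := by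
    have : r₁.length ≠ 0 := fun h => hab.ne (eq_of_length_eq_zero h)
    omega
  simp [edges_append, mem_edges_of_length_eq_one hr₁]

lemma isChordless_of_length_eq_dist {u v : V} {p : G.Walk u v} (hp : p.length = G.dist u v) :
    p.IsChordless := by
  refine isChordless_iff_forall_mem_edges.mpr fun a b ha hb hab => ?_
  obtain ⟨q, r, rfl⟩ := mem_support_iff_exists_append.mp ha
  rcases (mem_support_append_iff q r).mp hb with hb | hb
  · have hrev : (r.reverse.append q.reverse).length = G.dist v u := by
      simpa [dist_comm, add_comm] using hp
    have := mem_edges_of_append_of_length_eq_dist hrev (by simpa using hb) hab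
    simpa [edges_append, Sym2.eq_swap, or_comm] using this
  · exact mem_edges_of_append_of_length_eq_dist hp hb hab

end Walk

lemma Reachable.of_forall_adj {H : SimpleGraph V} (h : ∀ a b, G.Adj a b → H.Reachable a b)
    {u v : V} (huv : G.Reachable u v) : H.Reachable u v := by
  obtain ⟨p⟩ := huv
  induction p with
  | nil => rfl
  | cons hadj _ ih => exact (h _ _ hadj).trans ih

/-- The subgraph induced on `T`, kept on the vertex type `V`: vertices outside `T` become
isolated. -/
def restrict (G : SimpleGraph V) (T : Set V) : SimpleGraph V where
  Adj a b := G.Adj a b ∧ a ∈ T ∧ b ∈ T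
  symm := ⟨fun _ _ h => ⟨h.1.symm, h.2.2, h.2.1⟩⟩
  loopless := ⟨fun a h => G.loopless.irrefl a h.1⟩

variable {T T' : Set V}

lemma restrict_le (G : SimpleGraph V) (T : Set V) : G.restrict T ≤ G := fun _ _ h => h.1

lemma restrict_mono (h : T ⊆ T') : G.restrict T ≤ G.restrict T' :=
  fun _ _ hab => ⟨hab.1, h hab.2.1, h hab.2.2⟩

lemma Walk.mem_of_mem_support_restrict {u v z : V} (p : (G.restrict T).Walk u v) (hu : u ∈ T)
    (hz : z ∈ p.support) : z ∈ T := by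
  induction p with
  | nil => simp_all
  | cons h p ih =>
    rcases List.mem_cons.mp (support_cons _ _ ▸ hz) with rfl | hz
    · exact hu
    · exact ih h.2.2 hz

lemma Reachable.mem_of_restrict {x z : V} (h : (G.restrict T).Reachable x z) (hx : x ∈ T) :
    z ∈ T :=
  h.elim fun p => p.mem_of_mem_support_restrict hx p.end_mem_support

lemma Reachable.restrict_setOf_reachable {x z : V} (h : (G.restrict T).Reachable x z) :
    (G.restrict {w | (G.restrict T).Reachable x w}).Reachable x z := by
  induction (reachable_iff_reflTransGen _ _).mp h with
  | refl => rfl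
  | tail hxb hbc ih =>
    have hxb := (reachable_iff_reflTransGen _ _).mpr hxb
    exact (ih hxb).trans (Adj.reachable ⟨hbc.1, hxb, hxb.trans hbc.reachable⟩)

section Separator

variable {B S : Set V} {x y : V}

def IsSeparator (G : SimpleGraph V) (B S : Set V) (x y : V) : Prop :=
  S ⊆ B \ {x, y} ∧ ¬(G.restrict (B \ S)).Reachable x y

lemma isSeparator_comm : G.IsSeparator B S x y ↔ G.IsSeparator B S y x := by
  rw [IsSeparator, IsSeparator, Set.pair_comm, reachable_comm]

lemma minimal_isSeparator_comm :
    Minimal (G.IsSeparator B · x y) S ↔ Minimal (G.IsSeparator B · y x) S := by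
  rw [show (G.IsSeparator B · x y) = (G.IsSeparator B · y x) from
    funext fun _ => propext isSeparator_comm]

lemma IsSeparator.left_mem_sdiff (h : G.IsSeparator B S x y) (hx : x ∈ B) : x ∈ B \ S :=
  ⟨hx, fun hxS => (h.1 hxS).2 (by simp)⟩

lemma exists_minimal_isSeparator [Finite V] (hxy : x ≠ y) (hadj : ¬G.Adj x y) :
    ∃ S, Minimal (G.IsSeparator B · x y) S := by
  refine exists_minimal_of_wellFoundedLT _ ⟨B \ {x, y}, subset_rfl, fun ⟨p⟩ => ?_⟩
  obtain ⟨d, -, hd, hd'⟩ := p.exists_boundary_dart {x} rfl hxy.symm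
  obtain ⟨hadj', -, hB, hnot⟩ := d.adj
  rw [Set.mem_singleton_iff] at hd hd'
  have hy : d.snd = y := by simp_all
  rw [hd, hy] at hadj'
  exact hadj hadj'

lemma exists_adj_reachable_of_minimal_isSeparator (hS : Minimal (G.IsSeparator B · x y) S)
    (hx : x ∈ B) {z : V} (hz : z ∈ S) :
    ∃ w, (G.restrict (B \ S)).Reachable x w ∧ G.Adj z w := by
  by_contra! hno
  have hsub : S \ {z} ⊆ B \ {x, y} := Set.sdiff_subset.trans hS.prop.1
  have hreach : (G.restrict (B \ (S \ {z}))).Reachable x y := by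
    by_contra h
    exact hS.not_prop_of_lt (Set.sdiff_singleton_ssubset.mpr hz) ⟨hsub, h⟩
  obtain ⟨p⟩ := hreach
  obtain ⟨d, -, hfst, hsnd⟩ := p.exists_boundary_dart
    {w | (G.restrict (B \ S)).Reachable x w} (Reachable.refl x) hS.prop.2
  obtain ⟨hadj, -, hB, hnS⟩ := d.adj
  by_cases hdS : d.snd ∈ S
  · have hdz : d.snd = z := by simpa [hdS] using hnS
    rw [hdz] at hadj
    exact hno _ hfst hadj.symm
  · have hfst' := hfst.mem_of_restrict (hS.prop.left_mem_sdiff hx)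
    exact hsnd (hfst.trans (Adj.reachable ⟨hadj, hfst', hB, hdS⟩))

lemma exists_chordless_path_of_minimal_isSeparator (hS : Minimal (G.IsSeparator B · x y) S)
    (hx : x ∈ B) {p q : V} (hp : p ∈ S) (hq : q ∈ S) (hpq : p ≠ q) (hadj : ¬G.Adj p q) :
    ∃ P : G.Walk p q, P.IsPath ∧ P.IsChordless ∧ 2 ≤ P.length ∧
      ∀ z ∈ P.support, z = p ∨ z = q ∨ (G.restrict (B \ S)).Reachable x z := by
  set C := {w | (G.restrict (B \ S)).Reachable x w}
  set H := G.restrict (C ∪ {p, q})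
  obtain ⟨a, ha, hpa⟩ := exists_adj_reachable_of_minimal_isSeparator hS hx hp
  obtain ⟨b, hb, hqb⟩ := exists_adj_reachable_of_minimal_isSeparator hS hx hq
  have hab : H.Reachable a b :=
    (ha.restrict_setOf_reachable.symm.trans hb.restrict_setOf_reachable).mono
      (restrict_mono Set.subset_union_left)
  have hreach : H.Reachable p q :=
    (Adj.reachable (⟨hpa, Or.inr (by simp), Or.inl ha⟩ : H.Adj p a)).trans
      (hab.trans (Adj.reachable (⟨hqb.symm, Or.inl hb, Or.inr (by simp)⟩ : H.Adj b q)))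
  obtain ⟨W, hW, hWlen⟩ := hreach.exists_path_of_dist
  have hsupp : ∀ z ∈ W.support, z ∈ C ∪ {p, q} :=
    fun z hz => W.mem_of_mem_support_restrict (Or.inr (by simp)) hz
  refine ⟨W.mapLe (G.restrict_le _), hW.mapLe _, ?_, ?_, fun z hz => ?_⟩
  · refine Walk.isChordless_iff_forall_mem_edges.mpr fun a b ha hb hab => ?_
    rw [Walk.support_mapLe_eq_support] at ha hb
    rw [Walk.edges_mapLe_eq_edges]
    exact (Walk.isChordless_of_length_eq_dist hWlen).mem_edges ha hb
      ⟨hab, hsupp a ha, hsupp b hb⟩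
  · have h0 : W.length ≠ 0 := fun h => hpq (Walk.eq_of_length_eq_zero h)
    have h1 : W.length ≠ 1 := fun h => hadj (Walk.adj_of_length_eq_one h).1
    rw [Walk.length_mapLe]
    omega
  · rw [Walk.support_mapLe_eq_support] at hz
    rcases hsupp z hz with hz | hz
    · exact Or.inr (Or.inr hz)
    · rcases hz with rfl | rfl <;> simp

end Separator

end SimpleGraph

namespace IsChordalGraph

variable {G : SimpleGraph V}

lemma restrict (hch : IsChordalGraph G) (T : Set V) : IsChordalGraph (G.restrict T) := by
  intro v c hc hlen
  have hv : v ∈ T := by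
    cases c with
    | nil => simp at hlen
    | cons h _ => exact h.2.1
  obtain ⟨a, b, ha, hb, hab, hnot⟩ := hch v (c.mapLe (G.restrict_le T)) (hc.mapLe _)
    (by rwa [Walk.length_mapLe])
  rw [Walk.support_mapLe_eq_support] at ha hb
  rw [Walk.edges_mapLe_eq_edges] at hnot
  exact ⟨a, b, ha, hb, ⟨hab, c.mem_of_mem_support_restrict hv ha,
    c.mem_of_mem_support_restrict hv hb⟩, hnot⟩

lemma exists_adj_of_chordless_paths (hch : IsChordalGraph G) {p q : V} {P Q : G.Walk p q}
    (hP : P.IsPath) (hQ : Q.IsPath) (hPc : P.IsChordless) (hQc : Q.IsChordless)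
    (hPl : 2 ≤ P.length) (hQl : 2 ≤ Q.length)
    (hdisj : ∀ z ∈ P.support, z ∈ Q.support → z = p ∨ z = q) :
    ∃ a ∈ P.support, ∃ b ∈ Q.support, a ∉ Q.support ∧ b ∉ P.support ∧ G.Adj a b := by
  have mem_tail : ∀ {a b z : V} {W : G.Walk a b}, W.IsPath → z ∈ W.support.tail →
      z ∈ W.support ∧ z ≠ a := fun {a _ z W} hW hz => by
    have hnd := hW.support_nodup
    rw [← W.cons_tail_support, List.nodup_cons] at hnd
    exact ⟨List.mem_of_mem_tail hz, fun h => hnd.1 (h ▸ hz)⟩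
  have hC : (P.append Q.reverse).IsCycle := by
    refine hP.isCycle_append hQ.reverse (fun z hzP hzQ => ?_) (by omega)
    obtain ⟨hzP, hzp⟩ := mem_tail hP hzP
    obtain ⟨hzQ, hzq⟩ := mem_tail hQ.reverse hzQ
    rw [Walk.support_reverse, List.mem_reverse] at hzQ
    exact (hdisj z hzP hzQ).elim hzp hzq
  -- A chord of this cycle cannot have both ends on `P`, nor both on `Q`.
  obtain ⟨a, b, ha, hb, hab, hchord⟩ := hch p _ hC (by simp; omega)
  simp only [Walk.mem_support_append_iff, Walk.support_reverse, List.mem_reverse] at ha hb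
  simp only [Walk.edges_append, Walk.edges_reverse, List.mem_append, List.mem_reverse,
    not_or] at hchord
  have hPP : a ∈ P.support → b ∈ P.support → False := fun ha hb =>
    hchord.1 (hPc.mem_edges ha hb hab)
  have hQQ : a ∈ Q.support → b ∈ Q.support → False := fun ha hb =>
    hchord.2 (hQc.mem_edges ha hb hab)
  by_contra! hno
  have hPQ := fun ha hb => hno a ha b hb
  have hQP := fun hb ha => hno b hb a ha
  have := hab.symm
  tauto

lemma isClique_of_minimal_isSeparator (hch : IsChordalGraph G) {B S : Set V} {x y : V}
    (hS : Minimal (G.IsSeparator B · x y) S) (hx : x ∈ B) (hy : y ∈ B) : G.IsClique S := by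
  intro p hp q hq hpq
  by_contra hadj
  have hS' := minimal_isSeparator_comm.mp hS
  obtain ⟨P, hP, hPc, hPl, hPsupp⟩ :=
    exists_chordless_path_of_minimal_isSeparator hS hx hp hq hpq hadj
  obtain ⟨Q, hQ, hQc, hQl, hQsupp⟩ :=
    exists_chordless_path_of_minimal_isSeparator hS' hy hp hq hpq hadj
  have hdisj : ∀ z ∈ P.support, z ∈ Q.support → z = p ∨ z = q := by
    intro z hzP hzQ
    by_contra! h
    have hxz := ((hPsupp z hzP).resolve_left h.1).resolve_left h.2
    have hyz := ((hQsupp z hzQ).resolve_left h.1).resolve_left h.2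
    exact hS.prop.2 (hxz.trans hyz.symm)
  obtain ⟨a, ha, b, hb, haQ, hbP, hab⟩ :=
    hch.exists_adj_of_chordless_paths hP hQ hPc hQc hPl hQl hdisj
  have hxa := ((hPsupp a ha).resolve_left (by rintro rfl; exact haQ Q.start_mem_support))
    |>.resolve_left (by rintro rfl; exact haQ Q.end_mem_support)
  have hyb := ((hQsupp b hb).resolve_left (by rintro rfl; exact hbP P.start_mem_support))
    |>.resolve_left (by rintro rfl; exact hbP P.end_mem_support)
  have hab' : (G.restrict (B \ S)).Adj a b :=
    ⟨hab, hxa.mem_of_restrict (hS.prop.left_mem_sdiff hx),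
      hyb.mem_of_restrict (hS'.prop.left_mem_sdiff hy)⟩
  exact hS.prop.2 (hxa.trans (hab'.reachable.trans hyb.symm))

lemma exists_simplicial_reachable (hch : IsChordalGraph G) {B S : Set V} {x y : V}
    (hS : Minimal (G.IsSeparator B · x y) S) (hx : x ∈ B) (hy : y ∈ B)
    (ih : ∀ B' ⊂ B, ¬G.IsClique B' → ∃ s₁ ∈ B', ∃ s₂ ∈ B', s₁ ≠ s₂ ∧ ¬G.Adj s₁ s₂ ∧
      G.IsClique (G.neighborSet s₁ ∩ B') ∧ G.IsClique (G.neighborSet s₂ ∩ B')) :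
    ∃ s, (G.restrict (B \ S)).Reachable x s ∧ G.IsClique (G.neighborSet s ∩ B) := by
  set C := {w | (G.restrict (B \ S)).Reachable x w}
  have hCB : ∀ s ∈ C, s ∈ B \ S := fun s hs => hs.mem_of_restrict (hS.prop.left_mem_sdiff hx)
  have hnbr : ∀ s ∈ C, G.neighborSet s ∩ B ⊆ C ∪ S := by
    intro s hs z ⟨hsz, hzB⟩
    by_cases hzS : z ∈ S
    · exact Or.inr hzS
    · exact Or.inl (hs.trans (Adj.reachable ⟨hsz, hCB s hs, hzB, hzS⟩))
  have hsimp : ∀ s ∈ C, G.IsClique (G.neighborSet s ∩ (C ∪ S)) →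
      G.IsClique (G.neighborSet s ∩ B) :=
    fun s hs h => h.subset (Set.subset_inter Set.inter_subset_left (hnbr s hs))
  by_cases hclique : G.IsClique (C ∪ S)
  · exact ⟨x, Reachable.refl x, hclique.subset (hnbr x (Reachable.refl x))⟩
  have hlt : C ∪ S ⊂ B := by
    refine (Set.ssubset_iff_of_subset (Set.union_subset (fun s hs => (hCB s hs).1)
      (fun s hs => (hS.prop.1 hs).1))).mpr ⟨y, hy, ?_⟩
    rintro (hyC | hyS)
    · exact hS.prop.2 hyC
    · exact (hS.prop.1 hyS).2 (by simp)
  obtain ⟨s₁, h₁, s₂, h₂, hne, hnadj, hs₁, hs₂⟩ := ih _ hlt hclique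
  rcases h₁ with h₁ | h₁
  · exact ⟨s₁, h₁, hsimp s₁ h₁ hs₁⟩
  rcases h₂ with h₂ | h₂
  · exact ⟨s₂, h₂, hsimp s₂ h₂ hs₂⟩
  exact absurd (hch.isClique_of_minimal_isSeparator hS hx hy h₁ h₂ hne) hnadj

/-- Dirac's lemma, relative to a vertex set `B`. -/
theorem exists_nonadj_simplicial [Finite V] (hch : IsChordalGraph G) {B : Set V}
    (hB : ¬G.IsClique B) : ∃ s₁ ∈ B, ∃ s₂ ∈ B, s₁ ≠ s₂ ∧ ¬G.Adj s₁ s₂ ∧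
      G.IsClique (G.neighborSet s₁ ∩ B) ∧ G.IsClique (G.neighborSet s₂ ∩ B) := by
  induction B using WellFoundedLT.induction with
  | _ B ih =>
  obtain ⟨x, hx, y, hy, hxy, hadj⟩ : ∃ x ∈ B, ∃ y ∈ B, x ≠ y ∧ ¬G.Adj x y := by
    simpa [IsClique, Set.Pairwise] using hB
  obtain ⟨S, hS⟩ := exists_minimal_isSeparator (B := B) hxy hadj
  have hS' := minimal_isSeparator_comm.mp hS
  obtain ⟨s₁, hxs₁, hs₁⟩ := hch.exists_simplicial_reachable hS hx hy ih
  obtain ⟨s₂, hys₂, hs₂⟩ := hch.exists_simplicial_reachable hS' hy hx ih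
  have hs₁B := hxs₁.mem_of_restrict (hS.prop.left_mem_sdiff hx)
  have hs₂B := hys₂.mem_of_restrict (hS'.prop.left_mem_sdiff hy)
  refine ⟨s₁, hs₁B.1, s₂, hs₂B.1, ?_, fun h => ?_, hs₁, hs₂⟩
  · rintro rfl
    exact hS.prop.2 (hxs₁.trans hys₂.symm)
  · have hadj' : (G.restrict (B \ S)).Adj s₁ s₂ := ⟨h, hs₁B, hs₂B⟩
    exact hS.prop.2 (hxs₁.trans (hadj'.reachable.trans hys₂.symm))

lemma exists_simplicial_ne [Finite V] (hch : IsChordalGraph G) {u v w : V} (huv : G.Adj u v)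
    (hwu : G.Adj w u) (hwv : w ≠ v) :
    ∃ s, s ≠ u ∧ s ≠ v ∧ s ∈ G.support ∧ G.IsClique (G.neighborSet s) := by
  by_cases hA : G.IsClique G.support
  · exact ⟨w, hwu.ne, hwv, ⟨u, hwu⟩, hA.subset (G.neighborSet_subset_support w)⟩
  obtain ⟨s₁, h₁, s₂, h₂, hne, hnadj, hs₁, hs₂⟩ := hch.exists_nonadj_simplicial hA
  rw [Set.inter_eq_left.mpr (G.neighborSet_subset_support _)] at hs₁ hs₂
  by_cases h : s₁ ≠ u ∧ s₁ ≠ v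
  · exact ⟨s₁, h.1, h.2, h₁, hs₁⟩
  refine ⟨s₂, ?_, ?_, h₂, hs₂⟩ <;> rintro rfl <;> grind [huv.symm]

end IsChordalGraph

section Exposed

variable {G : SimpleGraph V} {a b s : V}

lemma isProperlyExposedEdge_mk_iff : IsProperlyExposedEdge G s(a, b) ↔
    G.Adj a b ∧ (∃! T, IsMaxGraphClique G T ∧ a ∈ T ∧ b ∈ T) ∧
      ∀ T, IsMaxGraphClique G T → a ∈ T → b ∈ T → 2 < T.ncard := by
  simp [IsProperlyExposedEdge, IsExposedEdge, and_assoc]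

lemma exposedBoundary_adj : (exposedBoundary G).Adj a b ↔ IsProperlyExposedEdge G s(a, b) := by
  rw [exposedBoundary, fromEdgeSet_adj]
  exact ⟨fun h => h.1.2, fun h => ⟨⟨h.1.1, h⟩, (isProperlyExposedEdge_mk_iff.mp h).1.ne⟩⟩

lemma IsMaxGraphClique.restrict {K T : Set V} (hK : IsMaxGraphClique G K) (hKT : K ⊆ T) :
    IsMaxGraphClique (G.restrict T) K :=
  ⟨fun _ ha _ hb hab => ⟨hK.1 ha hb hab, hKT ha, hKT hb⟩,
    fun K' hK' hsub => hK.2 K' (hK'.mono (G.restrict_le T)) hsub⟩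

lemma IsMaxGraphClique.of_restrict {X T : Set V} (hT : IsMaxGraphClique (G.restrict X) T)
    (hX : ∀ T', G.IsClique T' → T ⊆ T' → T' ⊆ X) : IsMaxGraphClique G T :=
  ⟨hT.1.mono (G.restrict_le X), fun T' hT' hsub =>
    hT.2 T' (fun _ ha _ hb hab => ⟨hT' ha hb hab, hX T' hT' hsub ha, hX T' hT' hsub hb⟩) hsub⟩

lemma IsProperlyExposedEdge.of_restrict {X : Set V}
    (he : IsProperlyExposedEdge (G.restrict X) s(a, b))
    (hX : ∀ T, G.IsClique T → a ∈ T → b ∈ T → T ⊆ X) : IsProperlyExposedEdge G s(a, b) := by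
  obtain ⟨hab, ⟨K, ⟨hK, ha, hb⟩, huniq⟩, hsize⟩ := isProperlyExposedEdge_mk_iff.mp he
  have hmax : ∀ T, IsMaxGraphClique G T → a ∈ T → b ∈ T → IsMaxGraphClique (G.restrict X) T :=
    fun T hT ha hb => hT.restrict (hX T hT.1 ha hb)
  refine isProperlyExposedEdge_mk_iff.mpr ⟨hab.1, ⟨K, ⟨?_, ha, hb⟩, ?_⟩, ?_⟩
  · exact hK.of_restrict fun T' hT' hsub => hX T' hT' (hsub ha) (hsub hb)
  · rintro T ⟨hT, ha, hb⟩
    exact huniq T ⟨hmax T hT ha hb, ha, hb⟩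
  · exact fun T hT ha hb => hsize T (hmax T hT ha hb) ha hb

lemma SimpleGraph.IsClique.subset_insert_neighborSet {T : Set V} (hT : G.IsClique T)
    (hsT : s ∈ T) : T ⊆ Insert.insert s (G.neighborSet s) := by
  intro t ht
  by_cases h : t = s
  · exact Or.inl h
  · exact Or.inr (hT hsT ht (Ne.symm h))

lemma isMaxGraphClique_insert_neighborSet (hs : G.IsClique (G.neighborSet s)) :
    IsMaxGraphClique G (insert s (G.neighborSet s)) :=
  ⟨hs.insert fun _ hb _ => hb, fun _ hT hsub =>
    hsub.antisymm (hT.subset_insert_neighborSet (hsub (Set.mem_insert s _)))⟩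

lemma isProperlyExposedEdge_of_isClique_neighborSet [Finite V]
    (hs : G.IsClique (G.neighborSet s)) (ha : G.Adj s a) (hb : G.Adj s b) (hab : a ≠ b) :
    IsProperlyExposedEdge G s(s, a) := by
  have hN := isMaxGraphClique_insert_neighborSet hs
  have huniq : ∀ T, IsMaxGraphClique G T → s ∈ T → T = insert s (G.neighborSet s) :=
    fun T hT hsT => hT.2 _ hN.1 (hT.1.subset_insert_neighborSet hsT)
  refine isProperlyExposedEdge_mk_iff.mpr ⟨ha, ⟨_, ⟨hN, Set.mem_insert _ _, Or.inr ha⟩,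
    fun T hT => huniq T hT.1 hT.2.1⟩, fun T hT hsT _ => ?_⟩
  rw [huniq T hT hsT, Set.two_lt_ncard_iff]
  exact ⟨s, a, b, Set.mem_insert _ _, Or.inr ha, Or.inr hb, ha.ne, hb.ne, hab⟩

lemma reachable_deleteEdges_exposedBoundary_of_isClique_neighborSet [Finite V]
    (hs : G.IsClique (G.neighborSet s)) (ha : G.Adj s a) (hb : G.Adj s b) (hab : a ≠ b)
    {e : Sym2 V} (he : s ∉ e) : ((exposedBoundary G).deleteEdges {e}).Reachable a b := by
  have hadj : ∀ {c d}, G.Adj s c → G.Adj s d → c ≠ d →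
      ((exposedBoundary G).deleteEdges {e}).Adj s c := fun hc hd hcd => by
    rw [deleteEdges_adj, exposedBoundary_adj]
    exact ⟨isProperlyExposedEdge_of_isClique_neighborSet hs hc hd hcd,
      fun h => he (h ▸ Sym2.mem_mk_left s _)⟩
  exact (hadj ha hb hab).reachable.symm.trans (hadj hb ha hab.symm).reachable

lemma reachable_of_adj_exposedBoundary_restrict_compl [Finite V]
    (hs : G.IsClique (G.neighborSet s)) {e : Sym2 V} (he : s ∉ e)
    (hab : ((exposedBoundary (G.restrict {s}ᶜ)).deleteEdges {e}).Adj a b) :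
    ((exposedBoundary G).deleteEdges {e}).Reachable a b := by
  rw [deleteEdges_adj, exposedBoundary_adj] at hab
  obtain ⟨hpe, hne⟩ := hab
  obtain ⟨hab, has, hbs⟩ := (isProperlyExposedEdge_mk_iff.mp hpe).1
  by_cases hsab : G.Adj s a ∧ G.Adj s b
  · exact reachable_deleteEdges_exposedBoundary_of_isClique_neighborSet hs hsab.1 hsab.2
      hab.ne he
  refine Adj.reachable ((deleteEdges_adj ..).mpr ⟨exposedBoundary_adj.mpr ?_, hne⟩)
  refine hpe.of_restrict fun T hT ha hb t ht hts => hsab ?_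
  rw [Set.mem_singleton_iff.mp hts] at ht
  exact ⟨hT ht ha (Ne.symm has), hT ht hb (Ne.symm hbs)⟩

end Exposed

theorem IsChordalGraph.reachable_deleteEdges_exposedBoundary [Finite V] {G : SimpleGraph V}
    (hch : IsChordalGraph G) {K : Set V} (hK : IsMaxGraphClique G K) (hK3 : 2 < K.ncard)
    {u v : V} (hu : u ∈ K) (hv : v ∈ K) (huv : u ≠ v) :
    ((exposedBoundary G).deleteEdges {s(u, v)}).Reachable u v := by
  induction G using WellFoundedLT.induction with
  | _ G ih =>
  obtain ⟨w, hw, hwuv⟩ := Set.exists_mem_notMem_of_ncard_lt_ncard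
    ((Set.ncard_pair huv).trans_lt hK3)
  simp only [Set.mem_insert_iff, Set.mem_singleton_iff, not_or] at hwuv
  obtain ⟨s, hsu, hsv, hsG, hs⟩ :=
    hch.exists_simplicial_ne (hK.1 hu hv huv) (hK.1 hw hu hwuv.1) hwuv.2
  obtain ⟨t, hst⟩ := G.mem_support.mp hsG
  have he : s ∉ s(u, v) := by simp [hsu, hsv]
  by_cases hsuv : G.Adj s u ∧ G.Adj s v
  · exact reachable_deleteEdges_exposedBoundary_of_isClique_neighborSet hs hsuv.1 hsuv.2 huv he
  have hsK : s ∉ K := fun h => hsuv ⟨hK.1 h hu hsu, hK.1 h hv hsv⟩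
  have hlt : G.restrict {s}ᶜ < G := lt_of_le_of_ne (G.restrict_le _) fun h =>
    (h.symm ▸ hst : (G.restrict {s}ᶜ).Adj s t).2.1 rfl
  have hK' := hK.restrict (Set.subset_compl_singleton_iff.mpr hsK)
  exact (ih _ hlt (hch.restrict _) hK').of_forall_adj
    fun a b hab => reachable_of_adj_exposedBoundary_restrict_compl hs he hab

/-- for a chordal graph `G`, the subgraph `∂G` of properly exposed edges has
no bridges: for every edge of `∂G`, its endpoints are joined by a path in `∂G` avoiding
that edge. Equivalently, every connected component of `∂G` is 2-edge-connected. -/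
theorem boundary_no_bridges (n : ℕ) (G : SimpleGraph (Fin n)) (hch : IsChordalGraph G) :
    ∀ a b : Fin n, (exposedBoundary G).Adj a b →
      ((exposedBoundary G).deleteEdges {s(a, b)}).Reachable a b := by
  intro a b hab
  obtain ⟨hadj, ⟨K, ⟨hK, ha, hb⟩, -⟩, hsize⟩ :=
    isProperlyExposedEdge_mk_iff.mp (exposedBoundary_adj.mp hab)
  exact hch.reachable_deleteEdges_exposedBoundary hK (hsize K hK ha hb) ha hb hadj.ne
end
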